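/- arXiv:0803.4486 — 13 statements merged into one kernel-verified Lean document; each statement's English description precedes it below -/
import Mathlib

section
/- If A is a maximum-size (k,l)-sum-free subset of a finite abelian group G and K is the stabilizer subgroup of kA (i.e., K = {g ∈ G : g + kA = kA}), then A + K = A; in particular A is a union of cosets of K. -/
open Finset Pointwise

/-- The h-fold sumset of a finset. -/
def foldSum {G : Type*} [AddCommGroup G] [DecidableEq G] (A : Finset G) : ℕ → Finset G
  | 0 => {0}
  | n + 1 => A + foldSum A n

lemma foldSum_add {G : Type*} [AddCommGroup G] [DecidableEq G] (A B : Finset G) (n : ℕ) :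
    foldSum (A + B) n = foldSum A n + foldSum B n := by
  induction n with
  | zero => simp [foldSum]
  | succ n ih =>
    show (A + B) + foldSum (A + B) n = (A + foldSum A n) + (B + foldSum B n)
    rw [ih, add_add_add_comm]

/-- If A is a maximum-size (k,l)-sum-free subset of a finite abelian group G and
K is the stabilizer of kA, then A + K = A. -/
theorem stmt0 {G : Type*} [AddCommGroup G] [Fintype G] [DecidableEq G]
    (k l : ℕ) (hl : 1 ≤ l) (hkl : l < k)
    (A : Finset G)
    (hA : Disjoint (foldSum A k) (foldSum A l))
    (hmax : ∀ B : Finset G, Disjoint (foldSum B k) (foldSum B l) → B.card ≤ A.card)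
    (K : Finset G)
    (hK : ∀ g : G, g ∈ K ↔ Finset.image (fun x => g + x) (foldSum A k) = foldSum A k) :
    A + K = A := by
  have h0K : (0 : G) ∈ K := by
    rw [hK]; simp
  have hAsub : A ⊆ A + K := fun a ha => by
    rw [Finset.mem_add]; exact ⟨a, ha, 0, h0K, add_zero a⟩
  -- K is closed under addition
  have hKadd : ∀ g ∈ K, ∀ h ∈ K, g + h ∈ K := by
    intro g hg h hh
    rw [hK] at hg hh ⊢
    calc Finset.image (fun x => g + h + x) (foldSum A k)
        = Finset.image ((fun x => g + x) ∘ (fun x => h + x)) (foldSum A k) := by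
          apply Finset.image_congr; intro x _; simp [add_assoc]
      _ = Finset.image (fun x => g + x) (Finset.image (fun x => h + x) (foldSum A k)) :=
          Finset.image_image.symm
      _ = Finset.image (fun x => g + x) (foldSum A k) := by rw [hh]
      _ = foldSum A k := hg
  -- sums of at least one element of K lie in K
  have hKn : ∀ n : ℕ, ∀ t ∈ foldSum K (n + 1), t ∈ K := by
    intro n
    induction n with
    | zero =>
      intro t ht
      have : t ∈ K + ({0} : Finset G) := ht
      rw [Finset.mem_add] at this
      obtain ⟨y, hy, z, hz, hyz⟩ := this
      simp only [Finset.mem_singleton] at hz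
      subst hz
      rw [add_zero] at hyz
      rwa [← hyz]
    | succ n ih =>
      intro t ht
      have : t ∈ K + foldSum K (n + 1) := ht
      rw [Finset.mem_add] at this
      obtain ⟨g, hg, s, hs, rfl⟩ := this
      exact hKadd g hg s (ih s hs)
  -- translation lemmas
  have hfwd : ∀ t ∈ K, ∀ x ∈ foldSum A k, t + x ∈ foldSum A k := by
    intro t ht x hx
    rw [hK] at ht
    rw [← ht]
    exact Finset.mem_image_of_mem _ hx
  have hbwd : ∀ t ∈ K, ∀ x ∈ foldSum A k, x - t ∈ foldSum A k := by
    intro t ht x hx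
    rw [hK] at ht
    rw [← ht] at hx
    obtain ⟨y, hy, hxy⟩ := Finset.mem_image.mp hx
    have : x - t = y := by rw [← hxy]; abel
    rwa [this]
  -- A + K is (k,l)-sum-free
  have hBdisj : Disjoint (foldSum (A + K) k) (foldSum (A + K) l) := by
    rw [Finset.disjoint_left]
    intro x hx1 hx2
    rw [foldSum_add, Finset.mem_add] at hx1 hx2
    obtain ⟨a, ha, s, hs, rfl⟩ := hx1
    obtain ⟨b, hb, t, ht, hbt⟩ := hx2
    obtain ⟨m, hm⟩ := Nat.exists_eq_succ_of_ne_zero (show k ≠ 0 by omega)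
    obtain ⟨m', hm'⟩ := Nat.exists_eq_succ_of_ne_zero (show l ≠ 0 by omega)
    have hsK : s ∈ K := hKn m s (by rw [hm] at hs; exact hs)
    have htK : t ∈ K := hKn m' t (by rw [hm'] at ht; exact ht)
    have h1 : a + s ∈ foldSum A k := by
      have := hfwd s hsK a ha
      rwa [add_comm] at this
    have h2 : (a + s) - t ∈ foldSum A k := hbwd t htK _ h1
    have h3 : (a + s) - t = b := by rw [← hbt]; abel
    rw [h3] at h2
    exact Finset.disjoint_left.mp hA h2 hb
  have hcard := hmax (A + K) hBdisj
  exact (Finset.eq_of_subset_of_card_le hAsub hcard).symm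
end

section
/- Let d, k, l be positive integers with k > l, set δ = gcd(d, k-l), and let c be a positive integer with (k+l)·c ≤ d - 1 - δ. Then there exists a ∈ Z_d such that the arithmetic progression A = {a, a+1, ..., a+c} is a (k,l)-sum-free subset of Z_d of size c+1. -/
open Finset Pointwise

lemma mem_foldSum_interval {d : ℕ} (a : ZMod d) (c n : ℕ) (x : ZMod d) :
    x ∈ foldSum ((Finset.range (c + 1)).image (fun i : ℕ => a + (i : ZMod d))) n ↔
      ∃ i ≤ n * c, x = n • a + (i : ZMod d) := by
  induction n generalizing x with
  | zero =>
    simp [foldSum]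
  | succ n ih =>
    constructor
    · intro hx
      rw [foldSum, Finset.mem_add] at hx
      obtain ⟨y, hy, z, hz, hyz⟩ := hx
      simp only [Finset.mem_image, Finset.mem_range] at hy
      obtain ⟨i₁, hi₁, rfl⟩ := hy
      obtain ⟨i₂, hi₂, rfl⟩ := ih z |>.mp hz
      refine ⟨i₁ + i₂, by nlinarith, ?_⟩
      rw [← hyz, succ_nsmul]
      push_cast
      ring
    · rintro ⟨i, hi, rfl⟩
      have hi' : i ≤ n * c + c := by rw [Nat.succ_mul] at hi; exact hi
      rw [foldSum, Finset.mem_add]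
      refine ⟨a + ((min i c : ℕ) : ZMod d), ?_, n • a + ((i - min i c : ℕ) : ZMod d), ?_, ?_⟩
      · exact Finset.mem_image.mpr ⟨min i c, Finset.mem_range.mpr (by omega), rfl⟩
      · exact (ih _).mpr ⟨i - min i c, by omega, rfl⟩
      · rw [Nat.cast_sub (min_le_left i c), succ_nsmul]
        ring

/-- If (k+l)·c ≤ d-1-gcd(d,k-l), there is an interval {a,a+1,...,a+c} that is
(k,l)-sum-free in Z_d of size c+1. -/
theorem stmt4 (d k l c : ℕ) (hd : 0 < d) (hl : 1 ≤ l) (hkl : l < k) (hc : 0 < c)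
    (h : (k + l) * c ≤ d - 1 - Nat.gcd d (k - l)) :
    ∃ a : ZMod d,
      Disjoint
        (foldSum ((Finset.range (c + 1)).image (fun i : ℕ => a + (i : ZMod d))) k)
        (foldSum ((Finset.range (c + 1)).image (fun i : ℕ => a + (i : ZMod d))) l) ∧
      ((Finset.range (c + 1)).image (fun i : ℕ => a + (i : ZMod d))).card = c + 1 := by
  haveI : NeZero d := ⟨hd.ne'⟩
  set δ := Nat.gcd d (k - l) with hδdef
  have hδpos : 0 < δ := Nat.gcd_pos_of_pos_left _ hd
  have hm1 : 1 ≤ (k + l) * c := Nat.one_le_iff_ne_zero.mpr (by positivity)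
  have hcle : c ≤ (k + l) * c := Nat.le_mul_of_pos_left c (by omega)
  -- t : target value of (k-l)*a
  set t := δ * (l * c / δ + 1) with htdef
  have hdm := Nat.div_add_mod (l * c) δ
  have hmod := Nat.mod_lt (l * c) hδpos
  have htexp : t = δ * (l * c / δ) + δ := by rw [htdef]; ring
  have ht1 : l * c < t := by omega
  have ht2 : t ≤ l * c + δ := by omega
  have hexp : (k + l) * c = k * c + l * c := by ring
  have hsum : (k + l) * c + δ ≤ d - 1 := by omega
  have htkd : t + k * c < d := by omega
  have hδt : δ ∣ t := ⟨_, rfl⟩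
  -- construct a
  set a : ZMod d := ((t / δ : ℕ) : ZMod d) * (((Nat.gcdB d (k - l) : ℤ) : ZMod d)) with hadef
  set B : ZMod d := ((Nat.gcdB d (k - l) : ℤ) : ZMod d) with hBdef
  have key : ((k - l : ℕ) : ZMod d) * a = (t : ZMod d) := by
    have hbez := Nat.gcd_eq_gcd_ab d (k - l)
    have hbez2 : ((k - l : ℕ) : ℤ) * Nat.gcdB d (k - l)
        = ((δ : ℕ) : ℤ) - d * Nat.gcdA d (k - l) := by rw [hδdef]; linarith
    have hδZ : ((k - l : ℕ) : ZMod d) * B = (δ : ZMod d) := by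
      calc ((k - l : ℕ) : ZMod d) * B
          = ((((k - l : ℕ) : ℤ) * Nat.gcdB d (k - l) : ℤ) : ZMod d) := by
            rw [hBdef]; push_cast; ring
        _ = ((((δ : ℕ) : ℤ) - d * Nat.gcdA d (k - l) : ℤ) : ZMod d) := by rw [hbez2]
        _ = (δ : ZMod d) := by push_cast; simp
    calc ((k - l : ℕ) : ZMod d) * a
        = ((t / δ : ℕ) : ZMod d) * (((k - l : ℕ) : ZMod d) * B) := by rw [hadef]; ring
      _ = ((t / δ : ℕ) : ZMod d) * ((δ : ℕ) : ZMod d) := by rw [hδZ]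
      _ = ((t / δ * δ : ℕ) : ZMod d) := by push_cast; ring
      _ = (t : ZMod d) := by rw [Nat.div_mul_cancel hδt]
  refine ⟨a, ?_, ?_⟩
  · rw [Finset.disjoint_left]
    intro x hxk hxl
    obtain ⟨i, hi, rfl⟩ := (mem_foldSum_interval a c k x).mp hxk
    obtain ⟨j, hj, hji⟩ := (mem_foldSum_interval a c l _).mp hxl
    have hk : k = l + (k - l) := by omega
    have heq : (t : ZMod d) + (i : ZMod d) = (j : ZMod d) := by
      rw [← key, ← nsmul_eq_mul]
      have : k • a = l • a + (k - l) • a := by rw [← add_nsmul, ← hk]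
      rw [this, add_assoc] at hji
      exact (add_right_injective (l • a) hji).symm ▸ by
        have := add_left_cancel hji
        exact this.symm ▸ rfl
    have heq2 : ((t + i : ℕ) : ZMod d) = ((j : ℕ) : ZMod d) := by push_cast; exact heq
    have hv := congrArg ZMod.val heq2
    rw [ZMod.val_cast_of_lt (by omega : t + i < d), ZMod.val_cast_of_lt (by omega : j < d)] at hv
    omega
  · rw [Finset.card_image_of_injOn, Finset.card_range]
    intro i hi j hj hij
    simp only [Finset.mem_coe, Finset.mem_range] at hi hj
    have : (i : ZMod d) = (j : ZMod d) := by
      exact add_left_cancel hij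
    have hv := congrArg ZMod.val this
    rw [ZMod.val_cast_of_lt (by omega : i < d), ZMod.val_cast_of_lt (by omega : j < d)] at hv
    exact hv
end

section
/- If d divides the exponent v of a finite abelian group G of order n, then λ_{k,l}(G) ≥ λ_{k,l}(Z_d)·(n/d). -/
open Finset Pointwise

/-!
Pulling back along a surjection `φ : G →+ ZMod d` preserves `(k, l)`-sum-freeness, since `φ` maps
the `n`-fold sumset of `φ⁻¹(B)` into that of `B`, and `|φ⁻¹(B)| = |B| · |G| / d`. Such a `φ`
exists when `d ∣ exp G`: for `g` of order `v = exp G`, divisibility of `ℝ/ℤ` extends the embedding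
`ZMod v ↪ ℝ/ℤ` along `j ↦ j • g` to a character of `G`. Its values are killed by `v`, so it
factors through `ZMod v`, giving a retraction of `G` onto `⟨g⟩ ≅ ZMod v`; reduce it modulo `d`.
-/

section Sumsets

variable {G H : Type*} [AddCommGroup G] [AddCommGroup H] [DecidableEq G] [DecidableEq H]

lemma foldSum_mono {A A' : Finset G} (h : A ⊆ A') : ∀ n, foldSum A n ⊆ foldSum A' n
  | 0 => subset_rfl
  | n + 1 => add_subset_add h (foldSum_mono h n)

lemma image_foldSum (φ : G →+ H) (A : Finset G) :
    ∀ n, (foldSum A n).image φ = foldSum (A.image φ) n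
  | 0 => by simp [foldSum]
  | n + 1 => by rw [foldSum, foldSum, image_add, image_foldSum φ A n]

lemma disjoint_foldSum_of_image_subset (φ : G →+ H) {A : Finset G} {B : Finset H}
    (hAB : A.image φ ⊆ B) {k l : ℕ} (hB : Disjoint (foldSum B k) (foldSum B l)) :
    Disjoint (foldSum A k) (foldSum A l) :=
  Disjoint.of_image_finset (f := φ) <| by
    rw [image_foldSum, image_foldSum]
    exact hB.mono (foldSum_mono hAB k) (foldSum_mono hAB l)

end Sumsets

lemma AddMonoidHom.card_filter_mem_of_surjective {G H : Type*} [AddGroup G] [AddMonoid H]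
    [Fintype G] [Fintype H] [DecidableEq H] {φ : G →+ H} (hφ : Function.Surjective φ)
    (B : Finset H) : #{x | φ x ∈ B} = #B * (Fintype.card G / Fintype.card H) := by
  set c := #{x | φ x = 0}
  have hpre (B : Finset H) : #{x | φ x ∈ B} = #B * c := by
    rw [← sum_card_fiberwise_eq_card_filter]
    exact sum_const_nat fun b _ ↦ AddMonoidHom.card_fiber_eq_of_mem_range φ (hφ b) ⟨0, map_zero φ⟩
  have hG : Fintype.card G = Fintype.card H * c := by simpa using hpre univ
  rw [hpre, hG, Nat.mul_div_cancel_left _ Fintype.card_pos]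

lemma exists_addMonoidHom_zmod_apply_eq_one {G : Type*} [AddCommGroup G] {g : G} {n : ℕ} [NeZero n]
    (hg : addOrderOf g = n) (hG : ∀ x : G, n • x = 0) : ∃ φ : G →+ ZMod n, φ g = 1 := by
  let ι : ZMod n →+ G := ZMod.lift n ⟨zmultiplesHom G g, by simp [← hg]⟩
  have hι : Function.Injective ι := (ZMod.lift_injective n).2 fun m hm ↦ by
    rwa [ZMod.intCast_zmod_eq_zero_iff_dvd, ← hg, addOrderOf_dvd_iff_zsmul_eq_zero]
  obtain ⟨χ, hχ⟩ := (Module.Baer.of_divisible UnitAddCircle).extension_property_addMonoidHom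
    ι hι ZMod.toAddCircle
  have hrange (x : G) : χ x ∈ (ZMod.toAddCircle : ZMod n →+ UnitAddCircle).range := by
    obtain ⟨m, -, hm⟩ := (AddCircle.nsmul_eq_zero_iff (NeZero.pos n)).1
      (by rw [← map_nsmul, hG, map_zero] : n • χ x = 0)
    exact ⟨m, by rw [ZMod.toAddCircle_natCast, ← hm, mul_one]⟩
  let e := AddMonoidHom.ofInjective (ZMod.toAddCircle_injective n)
  refine ⟨e.symm.toAddMonoidHom.comp (χ.codRestrict _ hrange), ZMod.toAddCircle_injective n ?_⟩
  have hιg : ι 1 = g := by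
    rw [← Int.cast_one, ZMod.lift_coe]
    exact one_zsmul g
  calc ZMod.toAddCircle (e.symm (χ.codRestrict _ hrange g))
      _ = χ g := AddMonoidHom.apply_ofInjective_symm _ _
      _ = ZMod.toAddCircle 1 := hιg ▸ DFunLike.congr_fun hχ 1

lemma exists_surjective_zmod_of_dvd_exponent {G : Type*} [AddCommGroup G]
    (hG : AddMonoid.ExponentExists G) {d : ℕ} (hd : d ∣ AddMonoid.exponent G) :
    ∃ φ : G →+ ZMod d, Function.Surjective φ := by
  have : NeZero (AddMonoid.exponent G) := ⟨hG.exponent_ne_zero⟩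
  obtain ⟨g, hg⟩ := AddMonoid.exists_addOrderOf_eq_exponent hG
  obtain ⟨φ, hφ⟩ := exists_addMonoidHom_zmod_apply_eq_one hg AddMonoid.exponent_nsmul_eq_zero
  refine ⟨(ZMod.castHom hd (ZMod d)).toAddMonoidHom.comp φ,
    (ZMod.castHom_surjective hd).comp fun a ↦ ?_⟩
  obtain ⟨m, rfl⟩ := ZMod.intCast_surjective a
  exact ⟨m • g, by simp [hφ]⟩

theorem stmt5_general {G : Type*} [AddCommGroup G] [Fintype G] [DecidableEq G]
    (k l d : ℕ)
    (hd : d ∣ AddMonoid.exponent G) :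
    ∀ B : Finset (ZMod d), Disjoint (foldSum B k) (foldSum B l) →
      ∃ A : Finset G, Disjoint (foldSum A k) (foldSum A l) ∧
        B.card * (Fintype.card G / d) ≤ A.card := by
  intro B hB
  have : NeZero d := ⟨ne_zero_of_dvd_ne_zero AddMonoid.exponent_ne_zero_of_finite hd⟩
  obtain ⟨φ, hφ⟩ := exists_surjective_zmod_of_dvd_exponent .of_finite hd
  refine ⟨({x | φ x ∈ B} : Finset G), disjoint_foldSum_of_image_subset φ ?_ hB, ?_⟩
  · exact image_subset_iff.2 fun x hx ↦ (mem_filter.1 hx).2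
  · rw [φ.card_filter_mem_of_surjective hφ, ZMod.card]

/-- If d divides the exponent of G, then λ_{k,l}(G) ≥ λ_{k,l}(Z_d)·(n/d). -/
theorem stmt5 {G : Type*} [AddCommGroup G] [Fintype G] [DecidableEq G]
    (k l d : ℕ) (hl : 1 ≤ l) (hkl : l < k)
    (hd : d ∣ AddMonoid.exponent G) :
    ∀ B : Finset (ZMod d), Disjoint (foldSum B k) (foldSum B l) →
      ∃ A : Finset G, Disjoint (foldSum A k) (foldSum A l) ∧
        B.card * (Fintype.card G / d) ≤ A.card :=
  stmt5_general k l d hd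
end

section
/- If the exponent v of a finite abelian group G does not divide k-l, then λ_{k,l}(G) ≥ n/(2(k+l)) > 0, where n = |G|. Conversely, if v divides k-l, then λ_{k,l}(G) = 0. -/
/-
If the exponent divides `k - l`, then `k • a = l • a` for every `a ∈ A`, so only the empty set is
`(k, l)`-sum-free. Otherwise some cyclic quotient `φ : G → ℤ/m` has `m ∤ k - l`. There the interval
`B = {a, a + 1, …, a + τ}` with `τ = ⌊(m - 1) / (2(k + l))⌋` has `k • B = k • a + [0, kτ]` and
`l • B = l • a + [0, lτ]`, which are disjoint once `(k - l) • a` is a residue `D` with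
`lτ < D < m - kτ`. The attainable `D` are the multiples of `gcd (k - l) m ≤ m / 2`, so one of them
lies in that window. The preimage `φ⁻¹ B` is again `(k, l)`-sum-free and has
`|B| · n / m ≥ n / (2(k + l))` elements.
-/

open Finset Pointwise

section SumFree

variable {G H : Type*} [AddCommGroup G] [DecidableEq G] [AddCommGroup H] [DecidableEq H]

lemma foldSum_eq_nsmul (A : Finset G) (n : ℕ) : foldSum A n = n • A := by
  induction n with
  | zero => rfl
  | succ n ih => rw [foldSum, ih, succ_nsmul']

lemma eq_empty_of_disjoint_nsmul {A : Finset G} {k l : ℕ} (hlk : l ≤ k)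
    (hexp : AddMonoid.exponent G ∣ k - l) (hA : Disjoint (k • A) (l • A)) : A = ∅ := by
  refine eq_empty_of_forall_notMem fun a ha => disjoint_left.mp hA (nsmul_mem_nsmul ha) ?_
  have hkl : k • a = l • a := by
    rw [← Nat.sub_add_cancel hlk, add_nsmul,
      AddMonoid.exponent_dvd_iff_forall_nsmul_eq_zero.mp hexp a, zero_add]
  exact hkl ▸ nsmul_mem_nsmul ha

lemma disjoint_nsmul_of_image_subset (φ : G →+ H) {A : Finset G} {B : Finset H} {k l : ℕ}
    (hAB : A.image φ ⊆ B) (hB : Disjoint (k • B) (l • B)) : Disjoint (k • A) (l • A) := by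
  refine Disjoint.of_image_finset (f := φ) ?_
  rw [image_nsmul, image_nsmul]
  exact hB.mono (nsmul_subset_nsmul_left hAB) (nsmul_subset_nsmul_left hAB)

end SumFree

lemma AddMonoidHom.card_filter_mem_mul_card_eq {G H : Type*} [AddGroup G] [Fintype G]
    [AddMonoid H] [Fintype H] [DecidableEq H] (φ : G →+ H) (hφ : Function.Surjective φ)
    (B : Finset H) : #{x | φ x ∈ B} * Fintype.card H = Fintype.card G * #B := by
  set c := #{x | φ x = 0}
  have hcount (S : Finset H) : #{x | φ x ∈ S} = #S * c := by
    rw [card_eq_sum_card_fiberwise (f := φ) (t := S) (fun x hx => by simpa using hx),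
      sum_const_nat fun y hy => ?_]
    rw [filter_filter, filter_congr fun x _ => and_iff_right_of_imp fun h => h ▸ hy]
    exact card_fiber_eq_of_mem_range φ (hφ y) ⟨0, map_zero φ⟩
  have hG : Fintype.card G = Fintype.card H * c := by
    simpa using hcount univ
  rw [hcount, hG]
  ring

lemma exists_disjoint_nsmul_of_surjective {G H : Type*} [AddCommGroup G] [Fintype G]
    [DecidableEq G] [AddCommGroup H] [Fintype H] [DecidableEq H] (φ : G →+ H)
    (hφ : Function.Surjective φ) {B : Finset H} {k l c : ℕ} (hB : Disjoint (k • B) (l • B))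
    (hc : Fintype.card H ≤ #B * c) :
    ∃ A : Finset G, Disjoint (k • A) (l • A) ∧ Fintype.card G ≤ #A * c := by
  refine ⟨({x | φ x ∈ B} : Finset G), disjoint_nsmul_of_image_subset φ (fun y hy => ?_) hB, ?_⟩
  · obtain ⟨x, hx, rfl⟩ := mem_image.mp hy
    simpa using hx
  · have hcount := φ.card_filter_mem_mul_card_eq hφ B
    refine Nat.le_of_mul_le_mul_right ?_ (Fintype.card_pos (α := H))
    calc Fintype.card G * Fintype.card H ≤ Fintype.card G * #B * c := by
          rw [mul_assoc]; gcongr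
      _ = #{x | φ x ∈ B} * c * Fintype.card H := by rw [← hcount]; ring

lemma AddCommGroup.exists_surjective_zmod_not_dvd {G : Type*} [AddCommGroup G] [Finite G]
    {N : ℕ} (hN : ¬ AddMonoid.exponent G ∣ N) :
    ∃ (m : ℕ) (_ : NeZero m) (φ : G →+ ZMod m), Function.Surjective φ ∧ ¬ m ∣ N := by
  obtain ⟨x, hx⟩ : ∃ x : G, N • x ≠ 0 := by
    simpa [AddMonoid.exponent_dvd_iff_forall_nsmul_eq_zero] using hN
  obtain ⟨ι, _, n, hn, ⟨e⟩⟩ := AddCommGroup.equiv_directSum_zmod_of_finite' G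
  classical
  obtain ⟨i, hi⟩ : ∃ i, N • e x i ≠ 0 := by
    by_contra! h
    exact hx (e.map_eq_zero_iff.mp (by ext i; rw [map_nsmul]; exact h i))
  refine ⟨n i, ⟨(zero_lt_one.trans (hn i)).ne'⟩,
    (DFinsupp.evalAddMonoidHom i).comp e.toAddMonoidHom, fun z => ⟨e.symm (DirectSum.of _ i z), ?_⟩, fun hdvd => hi ?_⟩
  · simp only [AddMonoidHom.comp_apply, AddEquiv.coe_toAddMonoidHom, AddEquiv.apply_symm_apply]
    exact DirectSum.of_eq_same (β := fun j => ZMod (n j)) i z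
  · rw [nsmul_eq_mul, (ZMod.natCast_eq_zero_iff N (n i)).mpr hdvd, zero_mul]

lemma Nat.two_mul_le_of_dvd_of_ne {d m : ℕ} (hd : d ∣ m) (hm : 0 < m) (hne : d ≠ m) :
    2 * d ≤ m := by
  obtain ⟨c, rfl⟩ := hd
  have : 2 ≤ c := by
    rcases c with _ | _ | c
    · simp at hm
    · simp at hne
    · omega
  nlinarith

lemma Nat.exists_mul_mem_Ioo {g P M : ℕ} (hg : 0 < g) (h : P + g < M) :
    ∃ j, g * j ∈ Set.Ioo P M := by
  refine ⟨P / g + 1, Nat.lt_mul_div_succ P hg, ?_⟩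
  have := Nat.mul_div_le P g
  rw [mul_add, mul_one]
  omega

namespace ZMod

variable {m : ℕ}

def interval (a : ZMod m) (τ : ℕ) : Finset (ZMod m) := (range (τ + 1)).image fun i : ℕ => a + i

lemma card_interval (a : ZMod m) {τ : ℕ} (hτ : τ < m) : #(interval a τ) = τ + 1 := by
  rw [interval, card_image_of_injOn, card_range]
  intro i hi j hj hij
  simp only [coe_range, Set.mem_Iio] at hi hj
  have := (natCast_eq_natCast_iff' i j m).mp (add_left_cancel hij)
  rwa [Nat.mod_eq_of_lt (by omega), Nat.mod_eq_of_lt (by omega)] at this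

lemma exists_eq_of_mem_nsmul_interval {a x : ZMod m} {τ n : ℕ}
    (hx : x ∈ n • interval a τ) : ∃ s ≤ n * τ, x = n • a + s := by
  induction n generalizing x with
  | zero => exact ⟨0, (zero_mul τ).ge, by simpa using hx⟩
  | succ n ih =>
    rw [succ_nsmul, mem_add] at hx
    obtain ⟨y, hy, b, hb, rfl⟩ := hx
    obtain ⟨s, hs, rfl⟩ := ih hy
    obtain ⟨i, hi, rfl⟩ := mem_image.mp hb
    refine ⟨s + i, by rw [mem_range] at hi; nlinarith, ?_⟩
    rw [succ_nsmul]
    push_cast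
    abel

lemma disjoint_nsmul_interval {a : ZMod m} {k l τ D : ℕ} (hlk : l ≤ k) (ha : (k - l) • a = D)
    (hD : l * τ < D) (hDm : D + k * τ < m) :
    Disjoint (k • interval a τ) (l • interval a τ) := by
  refine disjoint_left.mpr fun x hxk hxl => ?_
  obtain ⟨s, hs, rfl⟩ := exists_eq_of_mem_nsmul_interval hxk
  obtain ⟨t, ht, hst⟩ := exists_eq_of_mem_nsmul_interval hxl
  rw [← Nat.sub_add_cancel hlk, add_nsmul, ha] at hst
  have := (natCast_eq_natCast_iff' (D + s) t m).mp (by push_cast; linear_combination hst)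
  rw [Nat.mod_eq_of_lt (by omega), Nat.mod_eq_of_lt (by nlinarith)] at this
  omega

lemma exists_nsmul_eq_gcd_mul (N j : ℕ) : ∃ a : ZMod m, N • a = (N.gcd m * j : ℕ) := by
  refine ⟨(N.gcdA m * j : ℤ), ?_⟩
  have hbezout : (N.gcd m : ZMod m) = (N * N.gcdA m : ℤ) := by
    have := congrArg (Int.cast : ℤ → ZMod m) (Nat.gcd_eq_gcd_ab N m)
    push_cast [natCast_self] at this
    simpa using this
  rw [nsmul_eq_mul]
  push_cast [hbezout]
  ring

lemma exists_disjoint_nsmul [NeZero m] {k l : ℕ} (h : ¬ m ∣ k - l) :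
    ∃ B : Finset (ZMod m), Disjoint (k • B) (l • B) ∧ m ≤ #B * (2 * (k + l)) := by
  have hlk : l < k := Nat.sub_pos_iff_lt.mp (Nat.pos_of_ne_zero fun h0 => h (h0 ▸ dvd_zero m))
  have hm := NeZero.pos m
  have hg : 2 * (k - l).gcd m ≤ m := Nat.two_mul_le_of_dvd_of_ne (Nat.gcd_dvd_right _ m) hm
    fun hgm => h (hgm ▸ Nat.gcd_dvd_left _ m)
  set τ := (m - 1) / (2 * (k + l))
  have hτ : τ * (2 * (k + l)) ≤ m - 1 := Nat.div_mul_le_self _ _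
  have hτ' : m - 1 < 2 * (k + l) * (τ + 1) := Nat.lt_mul_div_succ _ (by omega)
  clear_value τ
  obtain ⟨j, hj, hj'⟩ := Nat.exists_mul_mem_Ioo (Nat.gcd_pos_of_pos_right (k - l) hm)
    (P := l * τ) (M := m - k * τ) (by
      have : τ * (2 * (k + l)) = 2 * (l * τ) + 2 * (k * τ) := by ring
      omega)
  obtain ⟨a, ha⟩ := exists_nsmul_eq_gcd_mul (m := m) (k - l) j
  refine ⟨interval a τ, disjoint_nsmul_interval hlk.le ha hj (by omega), ?_⟩
  have hτm : τ < m := (Nat.le_mul_of_pos_right τ (by omega : 0 < 2 * (k + l))).trans_lt (by omega)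
  rw [card_interval a hτm, mul_comm]
  omega

end ZMod

theorem stmt7_general {G : Type*} [AddCommGroup G] [Fintype G] [DecidableEq G]
    (k l : ℕ) (hkl : l < k) :
    (¬ AddMonoid.exponent G ∣ (k - l) →
      ∃ A : Finset G, Disjoint (foldSum A k) (foldSum A l) ∧ A.Nonempty ∧
        (Fintype.card G : ℚ) / (2 * (k + l)) ≤ A.card) ∧
    (AddMonoid.exponent G ∣ (k - l) →
      ∀ A : Finset G, Disjoint (foldSum A k) (foldSum A l) → A = ∅) := by
  simp only [foldSum_eq_nsmul]
  refine ⟨fun hexp => ?_, fun hexp A hA => eq_empty_of_disjoint_nsmul hkl.le hexp hA⟩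
  obtain ⟨m, _, φ, hφ, hm⟩ := AddCommGroup.exists_surjective_zmod_not_dvd hexp
  obtain ⟨B, hB, hBcard⟩ := ZMod.exists_disjoint_nsmul hm
  obtain ⟨A, hA, hAcard⟩ := exists_disjoint_nsmul_of_surjective φ hφ hB (by rwa [ZMod.card])
  refine ⟨A, hA, card_pos.mp (Nat.pos_of_mul_pos_right (Fintype.card_pos.trans_le hAcard)), ?_⟩
  rw [div_le_iff₀ (by norm_cast; omega)]
  exact_mod_cast hAcard

/-- If the exponent v of G does not divide k-l then λ_{k,l}(G) ≥ n/(2(k+l)) > 0;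
if v divides k-l then λ_{k,l}(G) = 0. -/
theorem stmt7 {G : Type*} [AddCommGroup G] [Fintype G] [DecidableEq G]
    (k l : ℕ) (hl : 1 ≤ l) (hkl : l < k) (hn : 1 < Fintype.card G) :
    (¬ AddMonoid.exponent G ∣ (k - l) →
      ∃ A : Finset G, Disjoint (foldSum A k) (foldSum A l) ∧ A.Nonempty ∧
        (Fintype.card G : ℚ) / (2 * (k + l)) ≤ A.card) ∧
    (AddMonoid.exponent G ∣ (k - l) →
      ∀ A : Finset G, Disjoint (foldSum A k) (foldSum A l) → A = ∅) :=
  stmt7_general k l hkl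
end

section
/- Let d divide n with d > 1 and suppose d does not divide k-l. Then the set A = {1 + i·d : 0 ≤ i ≤ n/d - 1} is a (k,l)-sum-free subset of Z_n of size n/d. -/
open Finset Pointwise

lemma foldSum_cast (n d : ℕ) (hd : d ∣ n)
    (h : ℕ) (x : ZMod n)
    (hx : x ∈ foldSum ((Finset.range (n / d)).image
      (fun i : ℕ => (1 : ZMod n) + (i : ZMod n) * (d : ZMod n))) h) :
    ZMod.castHom hd (ZMod d) x = (h : ZMod d) := by
  induction h generalizing x with
  | zero =>
    simp [foldSum] at hx
    simp [hx]
  | succ m ih =>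
    rw [foldSum, Finset.mem_add] at hx
    obtain ⟨a, ha, b, hb, rfl⟩ := hx
    simp only [Finset.mem_image, Finset.mem_range] at ha
    obtain ⟨i, _, rfl⟩ := ha
    have hb' := ih b hb
    rw [map_add, map_add, map_one, map_mul, map_natCast, map_natCast,
      ZMod.natCast_self, mul_zero, hb']
    push_cast
    ring

/-- If 1 < d, d ∣ n and d does not divide k-l, then {1+i·d : 0 ≤ i ≤ n/d - 1}
is a (k,l)-sum-free subset of Z_n of size n/d. -/
theorem stmt8 (n d k l : ℕ) (hn : 0 < n) (hd : d ∣ n) (hd1 : 1 < d)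
    (hnd : ¬ d ∣ (k - l)) (hl : 1 ≤ l) (hkl : l < k) :
    Disjoint
      (foldSum ((Finset.range (n / d)).image
        (fun i : ℕ => (1 : ZMod n) + (i : ZMod n) * (d : ZMod n))) k)
      (foldSum ((Finset.range (n / d)).image
        (fun i : ℕ => (1 : ZMod n) + (i : ZMod n) * (d : ZMod n))) l) ∧
    ((Finset.range (n / d)).image
      (fun i : ℕ => (1 : ZMod n) + (i : ZMod n) * (d : ZMod n))).card = n / d := by
  have hd0 : 0 < d := lt_trans one_pos hd1
  constructor
  · rw [Finset.disjoint_left]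
    intro x hxk hxl
    have h1 := foldSum_cast n d hd k x hxk
    have h2 := foldSum_cast n d hd l x hxl
    rw [h1] at h2
    rw [ZMod.natCast_eq_natCast_iff] at h2
    exact hnd ((Nat.modEq_iff_dvd' hkl.le).mp h2.symm)
  · rw [Finset.card_image_of_injOn, Finset.card_range]
    intro i hi j hj hij
    simp only [Finset.mem_coe, Finset.mem_range] at hi hj
    have key : ∀ a b : ℕ, a < n / d → b < n / d →
        (1 : ZMod n) + (a : ZMod n) * d = 1 + (b : ZMod n) * d → a ≤ b → a = b := by
      intro a b ha hb hab hle
      have : ((a * d : ℕ) : ZMod n) = ((b * d : ℕ) : ZMod n) := by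
        push_cast
        linear_combination hab
      rw [ZMod.natCast_eq_natCast_iff, Nat.modEq_iff_dvd'
        (Nat.mul_le_mul_right d hle)] at this
      rw [← Nat.sub_mul] at this
      have hlt : (b - a) * d < n := by
        calc (b - a) * d < (n / d) * d := by
              exact (Nat.mul_lt_mul_right hd0).mpr (lt_of_le_of_lt (Nat.sub_le b a) hb)
          _ ≤ n := Nat.div_mul_le_self n d
      have h0 := Nat.eq_zero_of_dvd_of_lt this hlt
      rcases Nat.mul_eq_zero.mp h0 with h0 | h0 <;> omega
    rcases le_total i j with h | h
    · exact key i j hi hj hij h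
    · exact (key j i hj hi hij.symm h).symm
end

section
/- Let H be a subgroup of Z_n of index d with d dividing k-l, and let A be a (k,l)-sum-free subset of Z_n contained in a single coset of H. Then |A| ≤ n/(2d). -/
open Finset Pointwise

lemma foldSum_nonempty {G : Type*} [AddCommGroup G] [DecidableEq G] {A : Finset G}
    (hA : A.Nonempty) (m : ℕ) : (foldSum A m).Nonempty := by
  induction m with
  | zero => exact ⟨0, by simp [foldSum]⟩
  | succ m ih =>
      obtain ⟨x, hx⟩ := hA
      obtain ⟨y, hy⟩ := ih
      exact ⟨x + y, Finset.add_mem_add hx hy⟩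

lemma card_le_foldSum {G : Type*} [AddCommGroup G] [DecidableEq G] {A : Finset G}
    (hA : A.Nonempty) (m : ℕ) : A.card ≤ (foldSum A (m + 1)).card := by
  have h := foldSum_nonempty hA m
  simpa [foldSum] using Finset.card_le_card_add_right h

lemma foldSum_mem_coset {n : ℕ} (H : AddSubgroup (ZMod n)) {A : Finset (ZMod n)} {a : ZMod n}
    (hAa : ∀ x ∈ A, x - a ∈ H) : ∀ m, ∀ x ∈ foldSum A m, x - m • a ∈ H
  | 0, x, hx => by
      simp only [foldSum, Finset.mem_singleton] at hx
      simpa [hx] using H.zero_mem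
  | m + 1, x, hx => by
      rw [foldSum, Finset.mem_add] at hx
      obtain ⟨y, hy, z, hz, rfl⟩ := hx
      have h1 := hAa y hy
      have h2 := foldSum_mem_coset H hAa m z hz
      have heq : y + z - (m + 1) • a = (y - a) + (z - m • a) := by
        rw [succ_nsmul]; abel
      rw [heq]
      exact H.add_mem h1 h2

/-- If H ≤ Z_n has index d with d ∣ (k-l), and A is a (k,l)-sum-free subset of Z_n
contained in a single coset of H, then |A| ≤ n/(2d). -/
theorem stmt9 (n d k l : ℕ) (hn : 0 < n) (hl : 1 ≤ l) (hkl : l < k)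
    (H : AddSubgroup (ZMod n)) (hH : H.index = d) (hdkl : d ∣ (k - l))
    (A : Finset (ZMod n)) (a : ZMod n) (hAa : ∀ x ∈ A, x - a ∈ H)
    (hfree : Disjoint (foldSum A k) (foldSum A l)) :
    A.card ≤ n / (2 * d) := by
  classical
  rcases A.eq_empty_or_nonempty with rfl | hA
  · simp
  haveI : NeZero n := ⟨hn.ne'⟩
  -- (k-l) • a ∈ H
  obtain ⟨c, hc⟩ := hdkl
  have hda : d • a ∈ H := by
    have := AddSubgroup.nsmul_index_mem H a
    rwa [hH] at this
  have hkla : (k - l) • a ∈ H := by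
    rw [hc, mul_comm, mul_smul]
    exact AddSubgroup.nsmul_mem H hda c
  -- the coset finset
  set C : Finset (ZMod n) := Finset.univ.filter (fun x => x - l • a ∈ H) with hC
  have hmemC : ∀ x, x ∈ C ↔ x - l • a ∈ H := by
    intro x; simp [hC]
  -- foldSum A l ⊆ C
  have hlC : foldSum A l ⊆ C := fun x hx =>
    (hmemC x).2 (foldSum_mem_coset H hAa l x hx)
  -- foldSum A k ⊆ C
  have hkC : foldSum A k ⊆ C := by
    intro x hx
    have h1 := foldSum_mem_coset H hAa k x hx
    have heq : x - l • a = (x - k • a) + (k - l) • a := by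
      have : (k - l) • a + l • a = k • a := by
        rw [← add_nsmul, Nat.sub_add_cancel hkl.le]
      rw [← this]; abel
    rw [hmemC, heq]
    exact H.add_mem h1 hkla
  -- card C = Nat.card H = n / d
  have hcardC : C.card = Nat.card H := by
    have : C = Finset.image (fun h : H => l • a + (h : ZMod n)) Finset.univ := by
      ext x
      simp only [Finset.mem_image, Finset.mem_univ, true_and, hmemC]
      constructor
      · intro hx
        exact ⟨⟨x - l • a, hx⟩, add_sub_cancel _ _⟩
      · rintro ⟨⟨h, hh⟩, rfl⟩
        rw [add_sub_cancel_left]; exact hh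
    rw [this, Finset.card_image_of_injective _ (fun x y hxy => Subtype.ext (add_left_cancel hxy)), Finset.card_univ, Nat.card_eq_fintype_card]
  have hdn : d * Nat.card H = n := by
    have := AddSubgroup.index_mul_card H
    rwa [hH, Nat.card_zmod] at this
  -- disjoint union card bound
  have hdisj : (foldSum A k).card + (foldSum A l).card ≤ C.card := by
    rw [← Finset.card_union_of_disjoint hfree]
    exact Finset.card_le_card (Finset.union_subset hkC hlC)
  obtain ⟨k', rfl⟩ : ∃ k', k = k' + 1 := ⟨k - 1, by omega⟩
  obtain ⟨l', rfl⟩ : ∃ l', l = l' + 1 := ⟨l - 1, by omega⟩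
  have h1 := card_le_foldSum hA k'
  have h2 := card_le_foldSum hA l'
  have : 2 * A.card ≤ Nat.card H := by
    rw [← hcardC]; omega
  have hd0 : 0 < d := by
    rcases Nat.eq_zero_or_pos d with h | h
    · subst h; simp at hdn; omega
    · exact h
  have hcardH : n / d = Nat.card H :=
    Nat.div_eq_of_eq_mul_right hd0 hdn.symm
  rw [mul_comm 2 d, ← Nat.div_div_eq_div_mul, hcardH]
  omega
end

section
/- If A = {a, a+d, ..., a+c·d} is a (k,l)-sum-free arithmetic progression in Z_n whose difference d is relatively prime to n, then (k+l)·c ≤ n-2; consequently |A| ≤ ⌊(n-2)/(k+l)⌋ + 1. -/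
open Finset Pointwise

lemma mem_foldSum_ap {n : ℕ} (a e : ZMod n) (c : ℕ) (h : ℕ) :
    ∀ j : ℕ, j ≤ h * c →
      (h : ZMod n) * a + (j : ZMod n) * e ∈
        foldSum ((Finset.range (c + 1)).image (fun i : ℕ => a + (i : ZMod n) * e)) h := by
  induction h with
  | zero =>
      intro j hj
      have : j = 0 := by omega
      subst this
      simp [foldSum]
  | succ h ih =>
      intro j hj
      rw [Nat.succ_mul] at hj
      have hdecomp : ∃ i j', i ≤ c ∧ j' ≤ h * c ∧ i + j' = j :=
        ⟨j - h * c, min j (h * c), by omega, by omega, by omega⟩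
      obtain ⟨i, j', hi, hj', rfl⟩ := hdecomp
      have hmem : a + (i : ZMod n) * e ∈
          (Finset.range (c + 1)).image (fun i : ℕ => a + (i : ZMod n) * e) :=
        Finset.mem_image.mpr ⟨i, Finset.mem_range.mpr (by omega), rfl⟩
      have := Finset.add_mem_add hmem (ih j' hj')
      have heq : ((h + 1 : ℕ) : ZMod n) * a + ((i + j' : ℕ) : ZMod n) * e =
          (a + (i : ZMod n) * e) + ((h : ZMod n) * a + (j' : ZMod n) * e) := by
        push_cast; ring
      rw [show foldSum ((Finset.range (c + 1)).image (fun i : ℕ => a + (i : ZMod n) * e)) (h+1)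
            = ((Finset.range (c + 1)).image (fun i : ℕ => a + (i : ZMod n) * e)) +
              foldSum ((Finset.range (c + 1)).image (fun i : ℕ => a + (i : ZMod n) * e)) h
          from rfl, heq]
      exact this

/-- A (k,l)-sum-free arithmetic progression {a, a+d, ..., a+c·d} in Z_n with
difference coprime to n satisfies (k+l)·c ≤ n-2, hence has at most
⌊(n-2)/(k+l)⌋+1 terms. -/
theorem stmt10 (n k l c d : ℕ) (hn : 1 < n) (hl : 1 ≤ l) (hkl : l < k)
    (hcop : Nat.Coprime d n) (a : ZMod n)
    (hfree : Disjoint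
      (foldSum ((Finset.range (c + 1)).image
        (fun i : ℕ => a + (i : ZMod n) * (d : ZMod n))) k)
      (foldSum ((Finset.range (c + 1)).image
        (fun i : ℕ => a + (i : ZMod n) * (d : ZMod n))) l)) :
    (k + l) * c ≤ n - 2 ∧
    ((Finset.range (c + 1)).image
      (fun i : ℕ => a + (i : ZMod n) * (d : ZMod n))).card ≤ (n - 2) / (k + l) + 1 := by
  haveI : NeZero n := ⟨by omega⟩
  set e : ZMod n := (d : ZMod n) with he_def
  have he : e * e⁻¹ = 1 := ZMod.coe_mul_inv_eq_one d hcop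
  have hmain : (k + l) * c ≤ n - 2 := by
    by_contra hcon
    push_neg at hcon
    have hbig : n ≤ k * c + l * c + 1 := by
      have h' : (k + l) * c = k * c + l * c := Nat.add_mul k l c
      omega
    set u : ℕ := (((k : ZMod n) * a - (l : ZMod n) * a) * e⁻¹).val with hu_def
    have hun : u < n := ZMod.val_lt _
    have hucast : (u : ZMod n) = ((k : ZMod n) * a - (l : ZMod n) * a) * e⁻¹ := by
      simp [hu_def, ZMod.natCast_val, ZMod.cast_id]
    have hue : (u : ZMod n) * e = (k : ZMod n) * a - (l : ZMod n) * a := by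
      rw [hucast]
      calc ((k : ZMod n) * a - (l : ZMod n) * a) * e⁻¹ * e
          = ((k : ZMod n) * a - (l : ZMod n) * a) * (e * e⁻¹) := by ring
        _ = _ := by rw [he]; ring
    by_cases hul : u ≤ l * c
    · -- x = k•a lies in both sumsets
      have hk : (k : ZMod n) * a + ((0 : ℕ) : ZMod n) * e ∈
          foldSum ((Finset.range (c + 1)).image (fun i : ℕ => a + (i : ZMod n) * e)) k :=
        mem_foldSum_ap a e c k 0 (by omega)
      have hlmem : (l : ZMod n) * a + (u : ZMod n) * e ∈
          foldSum ((Finset.range (c + 1)).image (fun i : ℕ => a + (i : ZMod n) * e)) l :=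
        mem_foldSum_ap a e c l u hul
      have hx : (k : ZMod n) * a + ((0 : ℕ) : ZMod n) * e
          = (l : ZMod n) * a + (u : ZMod n) * e := by
        rw [hue]; push_cast; ring
      exact (Finset.disjoint_left.mp hfree hk (hx ▸ hlmem))
    · push_neg at hul
      have hju : n - u ≤ k * c := by omega
      have hk : (k : ZMod n) * a + ((n - u : ℕ) : ZMod n) * e ∈
          foldSum ((Finset.range (c + 1)).image (fun i : ℕ => a + (i : ZMod n) * e)) k :=
        mem_foldSum_ap a e c k (n - u) hju
      have hlmem : (l : ZMod n) * a + ((0 : ℕ) : ZMod n) * e ∈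
          foldSum ((Finset.range (c + 1)).image (fun i : ℕ => a + (i : ZMod n) * e)) l :=
        mem_foldSum_ap a e c l 0 (by omega)
      have hcastsub : ((n - u : ℕ) : ZMod n) = -(u : ZMod n) := by
        have : ((n - u : ℕ) : ZMod n) = (n : ZMod n) - (u : ZMod n) :=
          Nat.cast_sub (le_of_lt hun)
        rw [this, ZMod.natCast_self]; ring
      have hx : (k : ZMod n) * a + ((n - u : ℕ) : ZMod n) * e
          = (l : ZMod n) * a + ((0 : ℕ) : ZMod n) * e := by
        rw [hcastsub]
        have : -(u : ZMod n) * e = -((u : ZMod n) * e) := by ring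
        rw [this, hue]; push_cast; ring
      exact (Finset.disjoint_left.mp hfree hk (hx ▸ hlmem))
  refine ⟨hmain, ?_⟩
  have hcard : ((Finset.range (c + 1)).image
      (fun i : ℕ => a + (i : ZMod n) * e)).card ≤ c + 1 := by
    calc _ ≤ (Finset.range (c + 1)).card := Finset.card_image_le
      _ = c + 1 := Finset.card_range _
  have hc : c ≤ (n - 2) / (k + l) := by
    rw [Nat.le_div_iff_mul_le (by omega), Nat.mul_comm]
    exact hmain
  exact hcard.trans (Nat.add_le_add_right hc 1)
end

section
/- The maximum size γ_{k,l}(Z_n) of a (k,l)-sum-free arithmetic progression in Z_n whose common difference is relatively prime to n satisfies ⌊(n-1-δ)/(k+l)⌋ + 1 ≤ γ_{k,l}(Z_n) ≤ ⌊(n-2)/(k+l)⌋ + 1, where δ = gcd(n, k-l), assuming n does not divide k-l. -/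
open Finset Pointwise

lemma foldSum_image_eq {n : ℕ} [NeZero n] (a d : ZMod n) (c : ℕ) (m : ℕ) :
    foldSum ((Finset.range (c+1)).image (fun i : ℕ => a + (i : ZMod n) * d)) m
      = (Finset.range (m*c+1)).image (fun s : ℕ => (m : ZMod n) * a + (s : ZMod n) * d) := by
  induction m with
  | zero => simp [foldSum]
  | succ m ih =>
    rw [show foldSum ((Finset.range (c+1)).image (fun i : ℕ => a + (i : ZMod n) * d)) (m+1)
        = ((Finset.range (c+1)).image (fun i : ℕ => a + (i : ZMod n) * d))
          + foldSum ((Finset.range (c+1)).image (fun i : ℕ => a + (i : ZMod n) * d)) m from rfl,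
      ih]
    ext x
    simp only [Finset.mem_add, mem_image, mem_range, Nat.lt_succ_iff]
    constructor
    · rintro ⟨y, ⟨i, hi, rfl⟩, z, ⟨s, hs, rfl⟩, rfl⟩
      refine ⟨i + s, ?_, ?_⟩
      · have h1 : (m+1)*c = m*c + c := by ring
        omega
      · push_cast
        ring
    · rintro ⟨t, ht, rfl⟩
      have h1 : (m+1)*c = m*c + c := by ring
      refine ⟨a + ((min t c : ℕ) : ZMod n) * d, ⟨min t c, by omega, rfl⟩,
        (m : ZMod n) * a + ((t - min t c : ℕ) : ZMod n) * d, ⟨t - min t c, by omega, rfl⟩, ?_⟩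
      have hij : min t c + (t - min t c) = t := by omega
      have hc2 : ((min t c : ℕ) : ZMod n) + ((t - min t c : ℕ) : ZMod n) = (t : ZMod n) := by
        exact_mod_cast congrArg (Nat.cast : ℕ → ZMod n) hij
      push_cast
      linear_combination d * hc2

/-- Bounds for γ_{k,l}(Z_n), the maximum size of a (k,l)-sum-free arithmetic
progression in Z_n whose difference is coprime to n:
⌊(n-1-δ)/(k+l)⌋+1 ≤ γ ≤ ⌊(n-2)/(k+l)⌋+1, with δ = gcd(n,k-l). -/
theorem stmt11 (n k l : ℕ) (hn : 1 < n) (hl : 1 ≤ l) (hkl : l < k)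
    (hnd : ¬ n ∣ (k - l)) :
    (∃ (a : ZMod n) (d c : ℕ), Nat.Coprime d n ∧
      Disjoint
        (foldSum ((Finset.range (c + 1)).image
          (fun i : ℕ => a + (i : ZMod n) * (d : ZMod n))) k)
        (foldSum ((Finset.range (c + 1)).image
          (fun i : ℕ => a + (i : ZMod n) * (d : ZMod n))) l) ∧
      (n - 1 - Nat.gcd n (k - l)) / (k + l) + 1 ≤
        ((Finset.range (c + 1)).image
          (fun i : ℕ => a + (i : ZMod n) * (d : ZMod n))).card) ∧
    (∀ (a : ZMod n) (d c : ℕ), Nat.Coprime d n →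
      Disjoint
        (foldSum ((Finset.range (c + 1)).image
          (fun i : ℕ => a + (i : ZMod n) * (d : ZMod n))) k)
        (foldSum ((Finset.range (c + 1)).image
          (fun i : ℕ => a + (i : ZMod n) * (d : ZMod n))) l) →
      ((Finset.range (c + 1)).image
        (fun i : ℕ => a + (i : ZMod n) * (d : ZMod n))).card ≤ (n - 2) / (k + l) + 1) := by
  haveI : NeZero n := ⟨by omega⟩
  refine ⟨?_, ?_⟩
  · set δ := Nat.gcd n (k - l) with hδ
    have hklpos : 0 < k - l := by omega
    have hδpos : 0 < δ := Nat.gcd_pos_of_pos_left _ (by omega)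
    have hδdvdn : δ ∣ n := Nat.gcd_dvd_left n (k - l)
    have hδlt : δ < n := by
      rcases lt_or_eq_of_le (Nat.le_of_dvd (by omega) hδdvdn) with h | h
      · exact h
      · exact absurd (h ▸ Nat.gcd_dvd_right n (k - l)) hnd
    set c := (n - 1 - δ) / (k + l) with hc
    -- basic facts about c
    have hsum : (k + l) * c ≤ n - 1 - δ := by
      rw [hc, mul_comm]; exact Nat.div_mul_le_self _ _
    have hklc : (k + l) * c = k * c + l * c := by ring
    have hcn : c < n := by
      have : c ≤ (k + l) * c := Nat.le_mul_of_pos_left c (by omega)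
      omega
    set m := δ * (l * c / δ) + δ with hm
    have hdm := Nat.div_add_mod (l * c) δ
    have hmod := Nat.mod_lt (l * c) hδpos
    have hml : l * c < m := by omega
    have hmu : m ≤ l * c + δ := by omega
    have hkey : m + k * c ≤ n - 1 := by omega
    -- solve (k-l) * a = m
    obtain ⟨q, hq⟩ : δ ∣ m := ⟨l * c / δ + 1, by ring⟩
    have hbez := Nat.gcd_eq_gcd_ab n (k - l)
    set a : ZMod n := ((Nat.gcdB n (k - l) * q : ℤ) : ZMod n) with ha
    have hma : ((k - l : ℕ) : ZMod n) * a = (m : ZMod n) := by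
      have h1 : ((k - l : ℕ) : ℤ) * (Nat.gcdB n (k - l) * q)
          = (m : ℤ) - (n : ℤ) * (Nat.gcdA n (k - l) * q) := by
        have h2 : (m : ℤ) = (δ : ℤ) * q := by exact_mod_cast hq
        rw [h2, hbez]; ring
      have : ((k - l : ℕ) : ZMod n) * a
          = (( ((k - l : ℕ) : ℤ) * (Nat.gcdB n (k - l) * q) : ℤ) : ZMod n) := by
        rw [ha]; push_cast; ring
      rw [this, h1]
      push_cast
      simp [ZMod.natCast_self]
    have hma' : ((k : ZMod n) - (l : ZMod n)) * a = (m : ZMod n) := by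
      rw [← hma, Nat.cast_sub hkl.le]
    refine ⟨a, 1, c, Nat.coprime_one_left n, ?_, ?_⟩
    · rw [foldSum_image_eq, foldSum_image_eq, Finset.disjoint_left]
      rintro x hx hx'
      simp only [mem_image, mem_range, Nat.lt_succ_iff] at hx hx'
      obtain ⟨s, hs, rfl⟩ := hx
      obtain ⟨t, ht, heq⟩ := hx'
      have hmt : (m : ZMod n) + (s : ZMod n) = (t : ZMod n) := by
        linear_combination -heq - hma'
      have hcast : ((m + s : ℕ) : ZMod n) = ((t : ℕ) : ZMod n) := by push_cast; exact hmt
      have hmeq : (m + s) % n = t % n := (ZMod.natCast_eq_natCast_iff _ _ _).mp hcast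
      have hdvd : n ∣ m + s - t :=
        (Nat.modEq_iff_dvd' (show t ≤ m + s by omega)).mp (Nat.ModEq.symm hmeq)
      have : n ≤ m + s - t := Nat.le_of_dvd (by omega) hdvd
      omega
    · have hinj : Set.InjOn (fun i : ℕ => a + (i : ZMod n) * ((1 : ℕ) : ZMod n))
          (Finset.range (c + 1)) := by
        intro i hi j hj hij
        simp only [coe_range, Set.mem_Iio] at hi hj
        simp only [Nat.cast_one, mul_one, add_right_inj] at hij
        have := (ZMod.natCast_eq_natCast_iff _ _ _).mp hij
        have h1 : i % n = i := Nat.mod_eq_of_lt (by omega)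
        have h2 : j % n = j := Nat.mod_eq_of_lt (by omega)
        unfold Nat.ModEq at this
        omega
      rw [Finset.card_image_of_injOn hinj, Finset.card_range]
  · intro a d c hcop hdisj
    rw [foldSum_image_eq, foldSum_image_eq, Finset.disjoint_left] at hdisj
    have hc : c ≤ (n - 2) / (k + l) := by
      by_contra hcon
      push_neg at hcon
      have hbig : n ≤ (k + l) * c + 1 := by
        have h1 := (Nat.div_lt_iff_lt_mul (show 0 < k + l by omega)).mp hcon
        have h2 : c * (k + l) = (k + l) * c := by ring
        omega
      have hklc : (k + l) * c = k * c + l * c := by ring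
      have hd1 : (d : ZMod n) * (d : ZMod n)⁻¹ = 1 := ZMod.coe_mul_inv_eq_one d hcop
      set r : ZMod n := ((k : ZMod n) * a - (l : ZMod n) * a) * (d : ZMod n)⁻¹ with hr
      have hv : r.val < n := ZMod.val_lt r
      have key : ∃ s t : ℕ, s ≤ k * c ∧ t ≤ l * c ∧ r + (s : ZMod n) = (t : ZMod n) := by
        rcases le_or_gt r.val (l * c) with h | h
        · refine ⟨0, r.val, by omega, h, ?_⟩
          simp [ZMod.natCast_val, ZMod.cast_id]
        · refine ⟨n - r.val, 0, by omega, by omega, ?_⟩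
          have hnv : ((n - r.val : ℕ) : ZMod n) = -((r.val : ℕ) : ZMod n) := by
            have h2 : ((n - r.val) + r.val : ℕ) = n := by omega
            have h3 := congrArg (Nat.cast : ℕ → ZMod n) h2
            push_cast at h3
            rw [ZMod.natCast_self] at h3
            linear_combination h3
          rw [hnv]
          simp [ZMod.natCast_val, ZMod.cast_id]
      obtain ⟨s, t, hs, ht, hst⟩ := key
      have heq : (k : ZMod n) * a + (s : ZMod n) * (d : ZMod n)
          = (l : ZMod n) * a + (t : ZMod n) * (d : ZMod n) := by
        linear_combination (d : ZMod n) * hst - ((k : ZMod n) * a - (l : ZMod n) * a) * hd1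
      refine hdisj (Finset.mem_image.mpr ⟨s, Finset.mem_range.mpr (by omega), rfl⟩)
        (Finset.mem_image.mpr ⟨t, Finset.mem_range.mpr (by omega), heq.symm⟩)
    calc ((Finset.range (c + 1)).image
          (fun i : ℕ => a + (i : ZMod n) * (d : ZMod n))).card
        ≤ (Finset.range (c + 1)).card := Finset.card_image_le
      _ = c + 1 := Finset.card_range _
      _ ≤ (n - 2) / (k + l) + 1 := by omega
end

section
/- The maximum size of a (3,1)-sum-free arithmetic progression in Z_n equals n/3 if 3 | n; equals ⌊(n+2)/4⌋ if 3 ∤ n and n ≢ 2 (mod 8); and equals (n-2)/4 if 3 ∤ n and n ≡ 2 (mod 8). -/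
open Finset Pointwise

/-- The arithmetic progression {a, a+e, ..., a+c·e} in Z_m. -/
def apSet (m : ℕ) (a e : ZMod m) (c : ℕ) : Finset (ZMod m) :=
  (Finset.range (c + 1)).image (fun i => a + (i : ℕ) • e)

/-- α_{3,1}(Z_n): the maximum size of a (3,1)-sum-free arithmetic progression in Z_n. -/
noncomputable def alpha31 (n : ℕ) : ℕ :=
  sSup {m : ℕ | ∃ (a e : ZMod n) (c : ℕ),
    Disjoint (foldSum (apSet n a e c) 3) (apSet n a e c) ∧ (apSet n a e c).card = m}

namespace Stmt13

variable {n : ℕ}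

lemma mem_apSet {a e : ZMod n} {c : ℕ} {x : ZMod n} :
    x ∈ apSet n a e c ↔ ∃ i, i ≤ c ∧ a + (i : ZMod n) * e = x := by
  simp only [apSet, Finset.mem_image, Finset.mem_range, Nat.lt_succ_iff, nsmul_eq_mul]

lemma foldSum_three (A : Finset (ZMod n)) : foldSum A 3 = A + A + A := by
  show A + (A + (A + {0})) = A + A + A
  rw [Finset.singleton_zero, add_zero, ← add_assoc]

lemma mem_foldSum3 {A : Finset (ZMod n)} {x : ZMod n} :
    x ∈ foldSum A 3 ↔ ∃ p ∈ A, ∃ q ∈ A, ∃ r ∈ A, p + q + r = x := by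
  rw [foldSum_three]
  simp only [Finset.mem_add]
  constructor
  · rintro ⟨y, ⟨p, hp, q, hq, rfl⟩, r, hr, rfl⟩
    exact ⟨p, hp, q, hq, r, hr, rfl⟩
  · rintro ⟨p, hp, q, hq, r, hr, rfl⟩
    exact ⟨p + q, ⟨p, hp, q, hq, rfl⟩, r, hr, rfl⟩

lemma card_apSet_le (a e : ZMod n) (c : ℕ) : (apSet n a e c).card ≤ c + 1 :=
  Finset.card_image_le.trans (by simp)

lemma card_apSet_le_of_period {a e : ZMod n} {c : ℕ} {d : ℕ} (hd : 0 < d)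
    (hde : ((d : ℕ) : ZMod n) * e = 0) : (apSet n a e c).card ≤ d := by
  have hsub : apSet n a e c ⊆ (Finset.range d).image (fun i => a + (i : ℕ) • e) := by
    intro x hx
    rw [mem_apSet] at hx
    obtain ⟨i, hi, rfl⟩ := hx
    refine Finset.mem_image.mpr ⟨i % d, Finset.mem_range.mpr (Nat.mod_lt _ hd), ?_⟩
    simp only [nsmul_eq_mul]
    congr 1
    have h1 : ((i : ℕ) : ZMod n) = ((d * (i / d) + i % d : ℕ) : ZMod n) := by
      rw [Nat.div_add_mod]
    push_cast at h1
    rw [h1]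
    linear_combination (-((i / d : ℕ) : ZMod n)) * hde
  exact (Finset.card_le_card hsub).trans (Finset.card_image_le.trans (by simp))

lemma card_apSet_eq {a e : ZMod n} {c : ℕ}
    (hinj : ∀ i ≤ c, ∀ j ≤ c, ((i : ℕ) : ZMod n) * e = ((j : ℕ) : ZMod n) * e → i = j) :
    (apSet n a e c).card = c + 1 := by
  rw [apSet, Finset.card_image_of_injOn, Finset.card_range]
  intro i hi j hj h
  simp only [Finset.coe_range, Set.mem_Iio] at hi hj
  simp only [nsmul_eq_mul] at h
  exact hinj i (by omega) j (by omega) (by exact add_left_cancel h)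

lemma cond_of_disjoint {a e : ZMod n} {c : ℕ}
    (hdis : Disjoint (foldSum (apSet n a e c) 3) (apSet n a e c)) :
    ∀ t : ℤ, -c ≤ t → t ≤ 3 * c → a + a + (t : ZMod n) * e ≠ 0 := by
  intro t h1 h2 h0
  obtain ⟨u, v, hu, hv, huv⟩ : ∃ u v : ℕ, u ≤ 3 * c ∧ v ≤ c ∧ (u : ℤ) - v = t := by
    rcases le_or_gt 0 t with h | h
    · exact ⟨t.toNat, 0, by omega, by omega, by omega⟩
    · exact ⟨0, (-t).toNat, by omega, by omega, by omega⟩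
  have hcast : ((u : ℕ) : ZMod n) = ((v : ℕ) : ZMod n) + ((t : ℤ) : ZMod n) := by
    have h3 : ((u : ℤ) : ZMod n) = (((v : ℤ) + t : ℤ) : ZMod n) := by
      congr 1; omega
    push_cast at h3 ⊢
    exact h3
  have key : a + a + a + (u : ZMod n) * e = a + (v : ZMod n) * e := by
    linear_combination h0 + e * hcast
  set i := min u c with hi
  set j := min (u - i) c with hj
  set k := u - i - j with hk
  have hfacts : i ≤ c ∧ j ≤ c ∧ k ≤ c ∧ i + j + k = u := by omega
  have h3 : a + a + a + (u : ZMod n) * e ∈ foldSum (apSet n a e c) 3 := by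
    refine mem_foldSum3.mpr ⟨a + (i : ZMod n) * e, mem_apSet.mpr ⟨i, hfacts.1, rfl⟩,
      a + (j : ZMod n) * e, mem_apSet.mpr ⟨j, hfacts.2.1, rfl⟩,
      a + (k : ZMod n) * e, mem_apSet.mpr ⟨k, hfacts.2.2.1, rfl⟩, ?_⟩
    have h4 : ((i : ZMod n) + j + k) = (u : ZMod n) := by
      have := hfacts.2.2.2
      have h5 : ((i + j + k : ℕ) : ZMod n) = ((u : ℕ) : ZMod n) := by rw [this]
      push_cast at h5
      exact h5
    linear_combination e * h4
  have h4 : a + (v : ZMod n) * e ∈ apSet n a e c := mem_apSet.mpr ⟨v, hv, rfl⟩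
  exact Finset.disjoint_left.mp hdis h3 (key ▸ h4)

lemma exists_int_mul (hn : n ≠ 0) (e x : ZMod n) (h : Nat.gcd n e.val ∣ x.val) :
    ∃ s : ℤ, (s : ZMod n) * e = x := by
  haveI : NeZero n := ⟨hn⟩
  obtain ⟨k, hk⟩ := h
  refine ⟨Nat.gcdB n e.val * k, ?_⟩
  have hb : (Nat.gcd n e.val : ℤ) = n * Nat.gcdA n e.val + e.val * Nat.gcdB n e.val :=
    Nat.gcd_eq_gcd_ab n e.val
  have he : ((e.val : ℕ) : ZMod n) = e := ZMod.natCast_rightInverse e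
  have hx : ((x.val : ℕ) : ZMod n) = x := ZMod.natCast_rightInverse x
  calc ((Nat.gcdB n e.val * k : ℤ) : ZMod n) * e
      = ((Nat.gcdB n e.val * k : ℤ) : ZMod n) * ((e.val : ℕ) : ZMod n) := by rw [he]
    _ = (((e.val : ℤ) * Nat.gcdB n e.val * k : ℤ) : ZMod n) := by push_cast; ring
    _ = ((((Nat.gcd n e.val : ℤ) - n * Nat.gcdA n e.val) * k : ℤ) : ZMod n) := by
        congr 1; rw [hb]; ring
    _ = ((Nat.gcd n e.val * k : ℤ) : ZMod n) - ((n : ZMod n)) * ((Nat.gcdA n e.val * k : ℤ) : ZMod n) := by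
        push_cast; ring
    _ = ((x.val : ℕ) : ZMod n) := by
        rw [ZMod.natCast_self]
        have : (Nat.gcd n e.val * k : ℤ) = (x.val : ℤ) := by exact_mod_cast hk.symm
        rw [this]; push_cast; ring
    _ = x := hx


lemma parity_val (hn : n ≠ 0) (h2 : 2 ∣ n) (x : ZMod n) : 2 ∣ (x + x).val := by
  haveI : NeZero n := ⟨hn⟩
  rw [← ZMod.natCast_eq_zero_iff]
  have h : (((x + x).val : ℕ) : ZMod 2) = ZMod.castHom h2 (ZMod 2) (x + x) := by
    rw [ZMod.castHom_apply, ZMod.natCast_val]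
  rw [h, map_add, ← two_mul, show (2 : ZMod 2) = 0 by decide, zero_mul]

lemma odd_cast (v : ℕ) (hv : v % 2 = 1) : ((v : ℕ) : ZMod 2) = 1 := by
  rw [← ZMod.natCast_mod, hv, Nat.cast_one]

/-- The claimed bound. -/
def Bnd (n : ℕ) : ℕ := if 3 ∣ n then n / 3 else if n % 8 = 2 then (n - 2) / 4 else (n + 2) / 4

lemma upper_main (hn : 2 ≤ n) (a e : ZMod n) (c : ℕ)
    (hdis : Disjoint (foldSum (apSet n a e c) 3) (apSet n a e c)) :
    (apSet n a e c).card ≤ Bnd n := by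
  haveI : NeZero n := ⟨by omega⟩
  have hn0 : n ≠ 0 := by omega
  set E := e.val with hE
  set g := Nat.gcd n E with hgdef
  have hgn : g ∣ n := Nat.gcd_dvd_left n E
  have hgE : g ∣ E := Nat.gcd_dvd_right n E
  have hgpos : 0 < g := Nat.gcd_pos_of_pos_left E (by omega)
  set d := n / g with hddef
  have hnd : n = g * d := (Nat.mul_div_cancel' hgn).symm
  have hdpos : 0 < d := Nat.div_pos (Nat.le_of_dvd (by omega) hgn) hgpos
  have hdn : d ∣ n := ⟨g, by rw [hnd]; ring⟩
  have hde : ((d : ℕ) : ZMod n) * e = 0 := by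
    have he : ((E : ℕ) : ZMod n) = e := ZMod.natCast_rightInverse e
    rw [← he, ← Nat.cast_mul, ZMod.natCast_eq_zero_iff]
    obtain ⟨E', hE'⟩ := hgE
    exact ⟨E', by rw [hE', hnd]; ring⟩
  have hcard1 := card_apSet_le a e c
  have hcard2 : (apSet n a e c).card ≤ d := card_apSet_le_of_period hdpos hde
  have hC := cond_of_disjoint hdis
  by_cases hcase : g ∣ (-(a + a)).val
  · -- Case B : -(a+a) is a multiple of e
    obtain ⟨s, hs⟩ := exists_int_mul hn0 e (-(a + a)) (by rwa [← hE])
    have hmulne : ∀ t : ℤ, -c ≤ t → t ≤ 3 * c → (t : ZMod n) * e ≠ -(a + a) := by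
      intro t h1 h2 hteq
      exact hC t h1 h2 (by rw [hteq]; ring)
    have hperiod : ∀ w : ℤ, ((s + d * w : ℤ) : ZMod n) * e = -(a + a) := by
      intro w
      have h1 : ((s + d * w : ℤ) : ZMod n) * e
          = ((s : ℤ) : ZMod n) * e + ((w : ℤ) : ZMod n) * (((d : ℕ) : ZMod n) * e) := by
        push_cast; ring
      rw [h1, hde, hs]; ring
    have hdc : 4 * c + 2 ≤ d := by
      by_contra hcon
      push_neg at hcon
      set t : ℤ := -c + (s + c) % d with ht
      have hd0 : (0 : ℤ) < d := by exact_mod_cast hdpos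
      have hm1 : 0 ≤ (s + c) % (d : ℤ) := Int.emod_nonneg _ (by omega)
      have hm2 : (s + c) % (d : ℤ) < d := Int.emod_lt_of_pos _ hd0
      have h1 : -(c : ℤ) ≤ t := by omega
      have h2 : t ≤ 3 * c := by
        have : (d : ℤ) ≤ 4 * c + 1 := by exact_mod_cast (by omega : d ≤ 4 * c + 1)
        omega
      have hfact := Int.mul_ediv_add_emod (s + c) (d : ℤ)
      have heq : t = s + (d : ℤ) * (-((s + c) / (d : ℤ))) := by rw [ht]; linarith
      exact hmulne t h1 h2 (by rw [heq]; exact hperiod _)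
    have hdlen : d ≤ n := Nat.le_of_dvd (by omega) hdn
    unfold Bnd
    split_ifs with h3 h8
    · -- 3 ∣ n
      rcases Nat.eq_zero_or_pos c with rfl | hc
      · have h3n : 3 ≤ n := Nat.le_of_dvd (by omega) h3
        have := hcard1
        omega
      · refine hcard1.trans ?_
        omega
    · -- ¬ 3 ∣ n, n % 8 = 2
      by_cases hclose : 4 * c + 2 ≤ n - 4
      · exact hcard1.trans (by omega)
      · push_neg at hclose
        have hdeq : d = n := by
          rcases eq_or_ne d n with h | h
          · exact h
          · exfalso
            obtain ⟨k, hk⟩ := hdn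
            have hk1 : k ≠ 1 := by rintro rfl; omega
            have hk0 : k ≠ 0 := by rintro rfl; omega
            have h2d : 2 * d ≤ n := by
              calc 2 * d = d * 2 := by ring
              _ ≤ d * k := Nat.mul_le_mul_left d (by omega)
              _ = n := hk.symm
            omega
        have hceq : 4 * c + 2 = n := by omega
        have hg1 : g = 1 := by
          by_contra hg
          have h2g : 2 ≤ g := by omega
          have : 2 * n ≤ g * n := Nat.mul_le_mul_right n h2g
          rw [← hdeq] at this
          omega
        have h2n : 2 ∣ n := by omega
        have hEodd : E % 2 = 1 := by
          by_contra h
          have h2E : 2 ∣ E := by omega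
          have hd2 := Nat.dvd_gcd h2n h2E
          rw [← hgdef, hg1] at hd2
          omega
        have hz : ((3 * c + 1 : ℕ) : ZMod n) * e = -(a + a) := by
          set r : ℤ := s % (n : ℤ) with hr
          have hnn0 : (0 : ℤ) < n := by exact_mod_cast (by omega : 0 < n)
          have hr1 : 0 ≤ r := Int.emod_nonneg _ (by omega)
          have hr2 : r < n := Int.emod_lt_of_pos _ hnn0
          have hfact := Int.mul_ediv_add_emod s (n : ℤ)
          have heq : r = s + (d : ℤ) * (-(s / (n : ℤ))) := by
            rw [hr, hdeq]; linarith
          have hsr : ((r : ℤ) : ZMod n) * e = -(a + a) := by rw [heq]; exact hperiod _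
          rcases eq_or_ne r (3 * c + 1 : ℤ) with hre | hre
          · have hcast : ((3 * c + 1 : ℕ) : ZMod n) = ((r : ℤ) : ZMod n) := by
              rw [hre]; push_cast; ring
            rw [hcast]; exact hsr
          · exfalso
            rcases le_or_gt r (3 * c) with hle | hlt
            · exact hmulne r (by omega) hle hsr
            · have h1 : -(c : ℤ) ≤ r - n := by omega
              have h2 : r - n ≤ 3 * c := by omega
              apply hmulne (r - n) h1 h2
              have hcast : ((r - n : ℤ) : ZMod n) = ((r : ℤ) : ZMod n) := by
                push_cast
                rw [ZMod.natCast_self]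
                ring
              rw [hcast]; exact hsr
        exfalso
        have hpar : 2 ∣ (-(a + a)).val := by
          have h := parity_val hn0 h2n (-a)
          rwa [← neg_add] at h
        have hzero : (((-(a + a)).val : ℕ) : ZMod 2) = 0 := by
          rw [ZMod.natCast_eq_zero_iff]; exact hpar
        have hone : (((-(a + a)).val : ℕ) : ZMod 2) = 1 := by
          have hcast2 : (((-(a + a)).val : ℕ) : ZMod 2)
              = ZMod.castHom h2n (ZMod 2) (-(a + a)) := by
            rw [ZMod.castHom_apply, ZMod.natCast_val]
          have hecast : ZMod.castHom h2n (ZMod 2) e = ((E : ℕ) : ZMod 2) := by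
            rw [ZMod.castHom_apply, ← ZMod.natCast_val]
          have hcodd : (3 * c + 1) % 2 = 1 := by omega
          rw [hcast2, ← hz, map_mul, map_natCast, hecast, odd_cast E hEodd,
            odd_cast _ hcodd, mul_one]
        rw [hzero] at hone
        exact absurd hone (by decide)
    · -- ¬ 3 ∣ n, n % 8 ≠ 2
      exact hcard1.trans (by omega)
  · -- Case A : -(a+a) is not a multiple of e
    have hg3 : 3 ≤ g := by
      by_contra h
      have : g = 1 ∨ g = 2 := by omega
      rcases this with h1 | h2
      · exact hcase (by rw [h1]; exact one_dvd _)
      · have h2n : 2 ∣ n := by rw [← h2]; exact hgn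
        have h := parity_val hn0 h2n (-a)
        rw [← neg_add] at h
        exact hcase (by rw [h2]; exact h)
    unfold Bnd
    split_ifs with h3 h8
    · exact hcard2.trans (Nat.div_le_div_left hg3 (by omega))
    · have hg5 : 5 ≤ g := by
        have hne3 : g ≠ 3 := fun h => h3 (h ▸ hgn)
        have hne4 : g ≠ 4 := by
          intro h4
          have h4n : (4 : ℕ) ∣ n := by rw [← h4]; exact hgn
          omega
        omega
      have h5d : 5 * d ≤ n := by
        calc 5 * d ≤ g * d := Nat.mul_le_mul_right d hg5
        _ = n := hnd.symm
      have hgle : g ≤ n := Nat.le_of_dvd (by omega) hgn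
      exact hcard2.trans (by omega)
    · have hg4 : 4 ≤ g := by
        have hne3 : g ≠ 3 := fun h => h3 (h ▸ hgn)
        omega
      have h4d : 4 * d ≤ n := by
        calc 4 * d ≤ g * d := Nat.mul_le_mul_right d hg4
        _ = n := hnd.symm
      exact hcard2.trans (by omega)


lemma lower_three (hn : 2 ≤ n) (h3 : 3 ∣ n) :
    ∃ (a e : ZMod n) (c : ℕ),
      Disjoint (foldSum (apSet n a e c) 3) (apSet n a e c) ∧ (apSet n a e c).card = n / 3 := by
  haveI : NeZero n := ⟨by omega⟩
  have h3n : 3 ≤ n := Nat.le_of_dvd (by omega) h3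
  refine ⟨1, 3, n / 3 - 1, ?_, ?_⟩
  · rw [Finset.disjoint_left]
    intro x hx hx'
    obtain ⟨p, hp, q, hq, r, hr, rfl⟩ := mem_foldSum3.mp hx
    set φ := ZMod.castHom h3 (ZMod 3) with hφ
    have key : ∀ y ∈ apSet n 1 3 (n / 3 - 1), φ y = 1 := by
      intro y hy
      obtain ⟨i, hi, rfl⟩ := mem_apSet.mp hy
      rw [map_add, map_mul, map_one, map_natCast, map_ofNat]
      rw [show ((3 : ZMod 3)) = 0 by decide, mul_zero, add_zero]
    have h1 := key p hp
    have h2 := key q hq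
    have h3' := key r hr
    have h4 := key _ hx'
    rw [map_add, map_add, h1, h2, h3'] at h4
    exact absurd h4 (by decide)
  · have hc : n / 3 - 1 + 1 = n / 3 := by omega
    rw [card_apSet_eq, hc]
    intro i hi j hj hij
    have hcast : ((3 * i : ℕ) : ZMod n) = ((3 * j : ℕ) : ZMod n) := by
      push_cast
      linear_combination hij
    rw [ZMod.natCast_eq_natCast_iff] at hcast
    unfold Nat.ModEq at hcast
    rw [Nat.mod_eq_of_lt (by omega), Nat.mod_eq_of_lt (by omega)] at hcast
    omega

lemma lower_nondvd (hn : 3 ≤ n) (h3 : ¬ 3 ∣ n) :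
    ∃ (a e : ZMod n) (c : ℕ),
      Disjoint (foldSum (apSet n a e c) 3) (apSet n a e c) ∧ (apSet n a e c).card = Bnd n := by
  haveI : NeZero n := ⟨by omega⟩
  have hBval : Bnd n = if n % 8 = 2 then (n - 2) / 4 else (n + 2) / 4 := by
    unfold Bnd; rw [if_neg h3]
  set c := Bnd n - 1 with hc
  set s := 3 * c + 1 + (3 * c + 1) % 2 with hs
  have hnum : s % 2 = 0 ∧ 3 * c + 1 ≤ s ∧ s + c + 1 ≤ n ∧ Bnd n = c + 1 ∧ c + 1 ≤ n := by
    by_cases h8 : n % 8 = 2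
    · rw [if_pos h8] at hBval; omega
    · rw [if_neg h8] at hBval; omega
  obtain ⟨hs2, hs3, hsn, hBc, hcn⟩ := hnum
  set a : ZMod n := -((s / 2 : ℕ) : ZMod n) with ha
  have h2a : ((s : ℕ) : ZMod n) = -(a + a) := by
    have h22 : (2 * (s / 2) : ℕ) = s := by omega
    calc ((s : ℕ) : ZMod n) = ((2 * (s / 2) : ℕ) : ZMod n) := by rw [h22]
    _ = -(a + a) := by rw [ha]; push_cast; ring
  refine ⟨a, 1, c, ?_, ?_⟩
  · rw [Finset.disjoint_left]
    intro x hx hx'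
    obtain ⟨p, hp, q, hq, r, hr, rfl⟩ := mem_foldSum3.mp hx
    obtain ⟨i, hi, rfl⟩ := mem_apSet.mp hp
    obtain ⟨j, hj, rfl⟩ := mem_apSet.mp hq
    obtain ⟨k, hk, rfl⟩ := mem_apSet.mp hr
    obtain ⟨v, hv, heq⟩ := mem_apSet.mp hx'
    have hzero : (((i : ℤ) + j + k - v - s : ℤ) : ZMod n) = 0 := by
      push_cast
      linear_combination -heq - h2a
    rw [ZMod.intCast_zmod_eq_zero_iff_dvd] at hzero
    have hb : ((i : ℤ) + j + k - v - s).natAbs < (n : ℤ).natAbs := by omega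
    have := Int.eq_zero_of_dvd_of_natAbs_lt_natAbs hzero hb
    omega
  · rw [card_apSet_eq, hBc]
    intro i hi j hj hij
    rw [mul_one, mul_one, ZMod.natCast_eq_natCast_iff] at hij
    unfold Nat.ModEq at hij
    rw [Nat.mod_eq_of_lt (by omega), Nat.mod_eq_of_lt (by omega)] at hij
    exact hij

lemma apSet_card_pos (a e : ZMod n) (c : ℕ) : 1 ≤ (apSet n a e c).card := by
  rw [Nat.one_le_iff_ne_zero, ← Nat.pos_iff_ne_zero, Finset.card_pos]
  exact ⟨a, mem_apSet.mpr ⟨0, Nat.zero_le _, by push_cast; ring⟩⟩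

lemma alpha_eq (hn : 2 ≤ n) : alpha31 n = Bnd n := by
  rw [alpha31]
  rcases eq_or_ne n 2 with rfl | hne
  · have hS : {m : ℕ | ∃ (a e : ZMod 2) (c : ℕ),
        Disjoint (foldSum (apSet 2 a e c) 3) (apSet 2 a e c) ∧ (apSet 2 a e c).card = m} = ∅ := by
      rw [Set.eq_empty_iff_forall_notMem]
      rintro m ⟨a, e, c, h1, h2⟩
      have hub := upper_main (by norm_num) a e c h1
      have hpos := apSet_card_pos a e c
      rw [show Bnd 2 = 0 by decide] at hub
      omega
    rw [hS, csSup_empty]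
    decide
  · have h3n : 3 ≤ n := by omega
    have hmem : Bnd n ∈ {m : ℕ | ∃ (a e : ZMod n) (c : ℕ),
        Disjoint (foldSum (apSet n a e c) 3) (apSet n a e c) ∧ (apSet n a e c).card = m} := by
      by_cases h3 : 3 ∣ n
      · obtain ⟨a, e, c, h1, h2⟩ := lower_three hn h3
        exact ⟨a, e, c, h1, by rw [h2]; unfold Bnd; rw [if_pos h3]⟩
      · exact lower_nondvd h3n h3
    have hub : ∀ m ∈ {m : ℕ | ∃ (a e : ZMod n) (c : ℕ),
        Disjoint (foldSum (apSet n a e c) 3) (apSet n a e c) ∧ (apSet n a e c).card = m},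
        m ≤ Bnd n := by
      rintro m ⟨a, e, c, h1, rfl⟩
      exact upper_main hn a e c h1
    exact le_antisymm (csSup_le ⟨_, hmem⟩ hub) (le_csSup ⟨Bnd n, fun m hm => hub m hm⟩ hmem)

end Stmt13


/-- The maximum size of a (3,1)-sum-free arithmetic progression in Z_n equals n/3
if 3 ∣ n; ⌊(n+2)/4⌋ if 3 ∤ n and n ≢ 2 (mod 8); (n-2)/4 if 3 ∤ n, n ≡ 2 (mod 8). -/
theorem stmt13 (n : ℕ) (hn : 2 ≤ n) :
    (3 ∣ n → alpha31 n = n / 3) ∧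
    (¬ 3 ∣ n → n % 8 ≠ 2 → alpha31 n = (n + 2) / 4) ∧
    (¬ 3 ∣ n → n % 8 = 2 → alpha31 n = (n - 2) / 4) := by
  have h := Stmt13.alpha_eq hn
  refine ⟨fun h3 => ?_, fun h3 h8 => ?_, fun h3 h8 => ?_⟩
  · rw [h]; unfold Stmt13.Bnd; rw [if_pos h3]
  · rw [h]; unfold Stmt13.Bnd; rw [if_neg h3, if_neg h8]
  · rw [h]; unfold Stmt13.Bnd; rw [if_neg h3, if_pos h8]
end

section
/- If n ≡ 6 (mod 8) and 3 ∤ n, then with a = (n+2)/8 and c = (n-2)/4, the set A = {a, a+1, ..., a+c} is a (3,1)-sum-free subset of Z_n of size (n+2)/4, and moreover 3A - A = Z_n \ {0}. -/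
open Finset Pointwise

lemma castInj' {n a b : ℕ} [NeZero n] (ha : a < n) (hb : b < n)
    (h : (a : ZMod n) = (b : ZMod n)) : a = b := by
  have h2 := congrArg ZMod.val h
  rwa [ZMod.val_cast_of_lt ha, ZMod.val_cast_of_lt hb] at h2

lemma castDvd' {n a b : ℕ} (hle : b ≤ a) (h : (a : ZMod n) = (b : ZMod n)) :
    n ∣ a - b :=
  (Nat.modEq_iff_dvd' hle).mp ((ZMod.natCast_eq_natCast_iff _ _ _).mp h).symm

/-- For n ≡ 6 (mod 8), 3 ∤ n, with a = (n+2)/8 and c = (n-2)/4, the interval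
{a, ..., a+c} is (3,1)-sum-free in Z_n of size (n+2)/4, and 3A - A = Z_n \ {0}. -/
theorem stmt14 (n : ℕ) (h8 : n % 8 = 6) (h3 : ¬ 3 ∣ n) :
    Disjoint
      (foldSum ((Finset.range ((n - 2) / 4 + 1)).image
        (fun i : ℕ => (((n + 2) / 8 : ℕ) : ZMod n) + (i : ZMod n))) 3)
      ((Finset.range ((n - 2) / 4 + 1)).image
        (fun i : ℕ => (((n + 2) / 8 : ℕ) : ZMod n) + (i : ZMod n))) ∧
    ((Finset.range ((n - 2) / 4 + 1)).image
      (fun i : ℕ => (((n + 2) / 8 : ℕ) : ZMod n) + (i : ZMod n))).card = (n + 2) / 4 ∧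
    (∀ x : ZMod n,
      x ∈ foldSum ((Finset.range ((n - 2) / 4 + 1)).image
            (fun i : ℕ => (((n + 2) / 8 : ℕ) : ZMod n) + (i : ZMod n))) 3
          - ((Finset.range ((n - 2) / 4 + 1)).image
            (fun i : ℕ => (((n + 2) / 8 : ℕ) : ZMod n) + (i : ZMod n)))
        ↔ x ≠ 0) := by
  clear h3
  obtain ⟨m, rfl⟩ : ∃ m, n = 8*m+6 := ⟨n/8, by omega⟩
  clear h8
  haveI : NeZero (8*m+6) := ⟨by omega⟩
  have e1 : (8*m+6+2)/8 = m+1 := by omega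
  have e2 : (8*m+6-2)/4 = 2*m+1 := by omega
  have e3 : (8*m+6+2)/4 = 2*m+2 := by omega
  rw [e1, e2, e3]
  set A : Finset (ZMod (8*m+6)) :=
    (Finset.range (2*m+1+1)).image
      (fun i : ℕ => ((m+1 : ℕ) : ZMod (8*m+6)) + (i : ZMod (8*m+6))) with hA
  have memA : ∀ x : ZMod (8*m+6),
      x ∈ A ↔ ∃ i, i ≤ 2*m+1 ∧ x = ((m+1+i : ℕ) : ZMod (8*m+6)) := by
    intro x
    simp only [hA, Finset.mem_image, Finset.mem_range, Nat.lt_succ_iff]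
    constructor
    · rintro ⟨i, hi, rfl⟩; exact ⟨i, hi, by push_cast; ring⟩
    · rintro ⟨i, hi, rfl⟩; exact ⟨i, hi, by push_cast; ring⟩
  have hfold : foldSum A 3 = A + (A + (A + {0})) := rfl
  have h0 : A + ({0} : Finset (ZMod (8*m+6))) = A := by
    ext y
    simp [Finset.mem_add]
  have mem3A : ∀ x : ZMod (8*m+6),
      x ∈ foldSum A 3 ↔ ∃ j, j ≤ 6*m+3 ∧ x = ((3*m+3+j : ℕ) : ZMod (8*m+6)) := by
    intro x
    rw [hfold, h0, Finset.mem_add]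
    constructor
    · rintro ⟨y, hy, w, hw, rfl⟩
      rw [Finset.mem_add] at hw
      obtain ⟨z, hz, u, hu, rfl⟩ := hw
      rw [memA] at hy hz hu
      obtain ⟨i1, hi1, rfl⟩ := hy
      obtain ⟨i2, hi2, rfl⟩ := hz
      obtain ⟨i3, hi3, rfl⟩ := hu
      exact ⟨i1+i2+i3, by omega, by push_cast; ring⟩
    · rintro ⟨j, hj, rfl⟩
      obtain ⟨i1, i2, i3, hi1, hi2, hi3, hs⟩ :
          ∃ i1 i2 i3, i1 ≤ 2*m+1 ∧ i2 ≤ 2*m+1 ∧ i3 ≤ 2*m+1 ∧ i1+i2+i3 = j :=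
        ⟨min j (2*m+1), min (j - min j (2*m+1)) (2*m+1),
          j - min j (2*m+1) - min (j - min j (2*m+1)) (2*m+1),
          by omega, by omega, by omega, by omega⟩
      refine ⟨_, (memA _).mpr ⟨i1, hi1, rfl⟩,
        _, Finset.mem_add.mpr ⟨_, (memA _).mpr ⟨i2, hi2, rfl⟩,
          _, (memA _).mpr ⟨i3, hi3, rfl⟩, rfl⟩, ?_⟩
      rw [← hs]; push_cast; ring
  have memDiff : ∀ x : ZMod (8*m+6),
      x ∈ foldSum A 3 - A ↔ ∃ k, k ≤ 8*m+4 ∧ x = ((1+k : ℕ) : ZMod (8*m+6)) := by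
    intro x
    rw [Finset.mem_sub]
    constructor
    · rintro ⟨y, hy, z, hz, rfl⟩
      rw [mem3A] at hy
      rw [memA] at hz
      obtain ⟨j, hj, rfl⟩ := hy
      obtain ⟨i, hi, rfl⟩ := hz
      refine ⟨2*m+1+j-i, by omega, ?_⟩
      have hnat : 3*m+3+j = (m+1+i) + (1 + (2*m+1+j-i)) := by omega
      rw [hnat]; push_cast; ring
    · rintro ⟨k, hk, rfl⟩
      by_cases hc : 2*m+1 ≤ k
      · refine ⟨_, (mem3A _).mpr ⟨k - (2*m+1), by omega, rfl⟩,
          _, (memA _).mpr ⟨0, by omega, rfl⟩, ?_⟩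
        have hnat : 3*m+3+(k-(2*m+1)) = (m+1+0) + (1+k) := by omega
        rw [hnat]; push_cast; ring
      · refine ⟨_, (mem3A _).mpr ⟨0, by omega, rfl⟩,
          _, (memA _).mpr ⟨2*m+1-k, by omega, rfl⟩, ?_⟩
        have hnat : 3*m+3+0 = (m+1+(2*m+1-k)) + (1+k) := by omega
        rw [hnat]; push_cast; ring
  refine ⟨?_, ?_, ?_⟩
  · rw [Finset.disjoint_left]
    intro x hx hxA
    rw [mem3A] at hx
    rw [memA] at hxA
    obtain ⟨j, hj, rfl⟩ := hx
    obtain ⟨i, hi, heq⟩ := hxA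
    have hd := castDvd' (a := 3*m+3+j) (b := m+1+i) (by omega) heq
    have := Nat.le_of_dvd (by omega) hd
    omega
  · rw [hA, Finset.card_image_of_injOn, Finset.card_range]
    intro i hi j hj hij
    simp only [Finset.coe_range, Set.mem_Iio] at hi hj
    have h1 : ((m+1+i : ℕ) : ZMod (8*m+6)) = ((m+1+j : ℕ) : ZMod (8*m+6)) := by
      push_cast
      linear_combination hij
    have := castInj' (n := 8*m+6) (by omega) (by omega) h1
    omega
  · intro x
    rw [memDiff]
    constructor
    · rintro ⟨k, hk, rfl⟩ hzero
      have h1 : ((1+k : ℕ) : ZMod (8*m+6)) = ((0 : ℕ) : ZMod (8*m+6)) := by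
        simpa using hzero
      have hd := castDvd' (a := 1+k) (b := 0) (by omega) h1
      have hd2 : (8*m+6) ∣ 1+k := by simpa using hd
      have hle : (8*m+6) ≤ 1+k := Nat.le_of_dvd (by omega) hd2
      omega
    · intro hx
      have hvlt := ZMod.val_lt x
      have hv0 : x.val ≠ 0 := fun h => hx ((ZMod.val_eq_zero x).mp h)
      refine ⟨x.val - 1, by omega, ?_⟩
      have h1 : 1 + (x.val - 1) = x.val := by omega
      rw [h1]
      exact (ZMod.natCast_rightInverse x).symm
end

section
/- If n ≡ 2 (mod 8) and 3 ∤ n, then there is no (3,1)-sum-free arithmetic progression in Z_n of size (n+2)/4; the maximum size of such a progression is (n-2)/4. -/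
open Finset Pointwise

/-!
Write `A = {a + i e : i ≤ c}` and `n = 8k + 2`. Then `3A` meets `A` exactly when `2a = l e` for
some integer `l ∈ [-3c, c]`. If `|A| > 2k`, then `c ≥ 2k` and the order `d` of `e` exceeds `2k`;
as `d ∣ n` and `3 ∤ n`, either `d = n/2 = 4k + 1` or `d = n`. By Bezout, `(n/d) a` is a multiple
`s e`. If `d = 4k + 1`, then `2a = s e` and `[-3c, c]` covers every residue mod `d`. If `d = n`,
then `2a = 2s e`, and an even residue mod `2(4k+1)` always has a representative in
`[-6k, 2k] ⊆ [-3c, c]`. Either way `A` is not sum-free. The bound `2k` is attained by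
`{k, k + 1, …, 3k - 1}`, whose triple sums lie in `[3k, 9k - 3]`.
-/

theorem mem_foldSum_three {G : Type*} [AddCommGroup G] [DecidableEq G] {A : Finset G} {x : G} :
    x ∈ foldSum A 3 ↔ ∃ p ∈ A, ∃ q ∈ A, ∃ r ∈ A, p + q + r = x := by
  simp only [foldSum, mem_add, mem_singleton]
  constructor
  · rintro ⟨p, hp, _, ⟨q, hq, _, ⟨r, hr, _, rfl, rfl⟩, rfl⟩, rfl⟩
    exact ⟨p, hp, q, hq, r, hr, by abel⟩
  · rintro ⟨p, hp, q, hq, r, hr, rfl⟩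
    exact ⟨p, hp, q + (r + 0), ⟨q, hq, r + 0, ⟨r, hr, 0, rfl, rfl⟩, rfl⟩, by abel⟩

section apSet

variable {n : ℕ} {a e : ZMod n} {c : ℕ}

theorem mem_apSet {x : ZMod n} : x ∈ apSet n a e c ↔ ∃ i ≤ c, a + i * e = x := by
  simp [apSet, nsmul_eq_mul]

theorem card_apSet_le_succ : (apSet n a e c).card ≤ c + 1 :=
  card_image_le.trans (card_range _).le

theorem card_apSet_le_addOrderOf [NeZero n] : (apSet n a e c).card ≤ addOrderOf e := by
  have hsub : apSet n a e c ⊆ (range (addOrderOf e)).image (fun i : ℕ => a + i • e) := by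
    intro x hx
    obtain ⟨i, -, rfl⟩ := mem_image.mp hx
    exact mem_image.mpr ⟨i % addOrderOf e, mem_range.mpr (Nat.mod_lt _ (addOrderOf_pos e)),
      by rw [mod_addOrderOf_nsmul]⟩
  exact (card_le_card hsub).trans (card_image_le.trans (card_range _).le)

theorem card_apSet_one (hc : c < n) : (apSet n a 1 c).card = c + 1 := by
  rw [apSet, card_image_of_injOn, card_range]
  intro i hi j hj hij
  simp only [coe_range, Set.mem_Iio, nsmul_eq_mul, mul_one, add_right_inj] at hi hj hij
  rwa [ZMod.natCast_eq_natCast_iff', Nat.mod_eq_of_lt (by omega), Nat.mod_eq_of_lt (by omega)]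
    at hij

/-- `3a + (i₁ + i₂ + i₃) e = a + j e` means `2a = l e` for `l = j - (i₁ + i₂ + i₃)`, and every
`l ∈ [-3c, c]` is of this form. -/
theorem disjoint_foldSum_three_apSet_iff :
    Disjoint (foldSum (apSet n a e c) 3) (apSet n a e c) ↔
      ∀ l : ℤ, -(3 * c : ℤ) ≤ l → l ≤ c → 2 * a ≠ l * e := by
  constructor
  · intro h l hl₁ hl₂ hl
    obtain ⟨i₁, i₂, i₃, hi₁, hi₂, hi₃, hi⟩ : ∃ i₁ i₂ i₃ : ℕ, i₁ ≤ c ∧ i₂ ≤ c ∧ i₃ ≤ c ∧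
        (i₁ + i₂ + i₃ : ℤ) = (-l).toNat := by
      refine ⟨min (-l).toNat c, min ((-l).toNat - c) c, (-l).toNat - 2 * c, ?_, ?_, ?_, ?_⟩ <;>
        omega
    refine disjoint_left.mp h (mem_foldSum_three.mpr ⟨_, mem_apSet.mpr ⟨i₁, hi₁, rfl⟩,
      _, mem_apSet.mpr ⟨i₂, hi₂, rfl⟩, _, mem_apSet.mpr ⟨i₃, hi₃, rfl⟩, rfl⟩)
      (mem_apSet.mpr ⟨l.toNat, by omega, ?_⟩)
    have hl' : ((l.toNat : ℤ) : ZMod n) = l + (i₁ + i₂ + i₃ : ℤ) := by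
      rw [hi, ← Int.cast_add]; congr 1; omega
    push_cast at hl' ⊢
    linear_combination (-1 : ZMod n) * hl + e * hl'
  · intro h
    rw [disjoint_left]
    rintro x hx hx'
    obtain ⟨_, hp, _, hq, _, hr, rfl⟩ := mem_foldSum_three.mp hx
    obtain ⟨i₁, hi₁, rfl⟩ := mem_apSet.mp hp
    obtain ⟨i₂, hi₂, rfl⟩ := mem_apSet.mp hq
    obtain ⟨i₃, hi₃, rfl⟩ := mem_apSet.mp hr
    obtain ⟨j, hj, hx'⟩ := mem_apSet.mp hx'
    refine h (j - (i₁ + i₂ + i₃)) (by omega) (by omega) ?_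
    push_cast
    linear_combination -hx'

end apSet

theorem Int.exists_modEq_mem_Ico (l lo : ℤ) {d : ℤ} (hd : 0 < d) :
    ∃ t ∈ Set.Ico lo (lo + d), t ≡ l [ZMOD d] :=
  ⟨toIcoMod hd lo l, toIcoMod_mem_Ico hd lo l,
    Int.modEq_iff_dvd.mpr
      ⟨toIcoDiv hd lo l, by rw [self_sub_toIcoMod_eq_mul, Int.cast_id, mul_comm]⟩⟩

theorem Nat.div_eq_one_or_two_of_dvd {d n : ℕ} (hd : d ∣ n) (hn : n < 4 * d) (h3 : ¬ 3 ∣ n) :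
    n / d = 1 ∨ n / d = 2 := by
  obtain ⟨q, rfl⟩ := hd
  have hd : 0 < d := Nat.pos_of_ne_zero (by rintro rfl; simp at hn)
  rw [Nat.mul_div_cancel_left q hd]
  have : q < 4 := by by_contra! h; nlinarith
  interval_cases q <;> simp_all

/-- Bezout: `n / addOrderOf e = gcd(n, e.val)` is an integer multiple of `e`. -/
theorem ZMod.exists_intCast_mul_eq_mul_div_addOrderOf {n : ℕ} [NeZero n] (e x : ZMod n) :
    ∃ s : ℤ, (s : ZMod n) * e = x * ((n / addOrderOf e : ℕ) : ZMod n) := by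
  have hgcd : n / addOrderOf e = n.gcd e.val := by
    have h := ZMod.addOrderOf_coe e.val (NeZero.ne n)
    rw [ZMod.natCast_zmod_val] at h
    rw [h, Nat.div_div_self (Nat.gcd_dvd_left _ _) (NeZero.ne n)]
  have hbezout : ((n.gcd e.val : ℕ) : ZMod n) = (n.gcdB e.val : ZMod n) * e := by
    rw [← Int.cast_natCast, Nat.gcd_eq_gcd_ab]
    push_cast
    rw [ZMod.natCast_self, ZMod.natCast_zmod_val]
    ring
  refine ⟨x.val * n.gcdB e.val, ?_⟩
  rw [hgcd, hbezout]
  push_cast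
  rw [ZMod.natCast_zmod_val]
  ring

theorem disjoint_foldSum_three_apSet_natCast_one {n : ℕ} {k c : ℕ} (hc : c < 2 * k)
    (hn : 2 * k + 3 * c < n) :
    Disjoint (foldSum (apSet n k 1 c) 3) (apSet n k 1 c) := by
  rw [disjoint_foldSum_three_apSet_iff]
  intro l hl₁ hl₂ hl
  have h0 : ((2 * k - l : ℤ) : ZMod n) = 0 := by
    push_cast
    linear_combination hl
  rw [ZMod.intCast_zmod_eq_zero_iff_dvd] at h0
  have := Int.le_of_dvd (by omega) h0
  omega

theorem card_apSet_le_of_disjoint {n k : ℕ} (hn : n = 8 * k + 2) (h3 : ¬ 3 ∣ n) {a e : ZMod n}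
    {c : ℕ} (h : Disjoint (foldSum (apSet n a e c) 3) (apSet n a e c)) :
    (apSet n a e c).card ≤ 2 * k := by
  have : NeZero n := ⟨by omega⟩
  by_contra! hcard
  have hc : 2 * k ≤ c := by have := card_apSet_le_succ (a := a) (e := e) (c := c); omega
  have hd : 2 * k < addOrderOf e := hcard.trans_le card_apSet_le_addOrderOf
  have hdvd : addOrderOf e ∣ n := by simpa using addOrderOf_dvd_natCard e
  rw [disjoint_foldSum_three_apSet_iff] at h
  obtain ⟨s, hs⟩ := ZMod.exists_intCast_mul_eq_mul_div_addOrderOf e a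
  rcases Nat.div_eq_one_or_two_of_dvd hdvd (by omega) h3 with hq | hq
  · -- `e` generates `ZMod n`, so `2a = 2s e`; since `n = 2 (4k + 1)`, `2s` has a representative
    -- in `[-6k, 2k]`, although the window `[-3c, c]` may miss one residue modulo `n`.
    have hdn : (addOrderOf e : ℤ) = 2 * (4 * k + 1) := by
      rw [Nat.eq_of_dvd_of_div_eq_one hdvd hq, hn]; push_cast; ring
    obtain ⟨t, ⟨ht₁, ht₂⟩, hts⟩ :=
      Int.exists_modEq_mem_Ico s (-(3 * k)) (d := 4 * k + 1) (by omega)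
    refine h (2 * t) (by omega) (by omega) ?_
    rw [hq, Nat.cast_one, mul_one] at hs
    rw [← hs, ← mul_assoc, ← Int.cast_two, ← Int.cast_mul, ← zsmul_eq_mul, ← zsmul_eq_mul,
      zsmul_eq_zsmul_iff_modEq, hdn]
    exact (hts.mul_left' (c := 2)).symm
  · -- `2a = s e`, and the window `[-3c, c]` is at least as long as `addOrderOf e = 4k + 1`.
    have hdn : (addOrderOf e : ℤ) = 4 * k + 1 := by
      have := Nat.div_mul_cancel hdvd; rw [hq] at this; omega
    obtain ⟨t, ⟨ht₁, ht₂⟩, hts⟩ :=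
      Int.exists_modEq_mem_Ico s (-(3 * c)) (d := addOrderOf e) (by omega)
    refine h t (by omega) (by omega) ?_
    rw [hq, Nat.cast_two] at hs
    rw [mul_comm 2 a, ← hs, ← zsmul_eq_mul, ← zsmul_eq_mul, zsmul_eq_zsmul_iff_modEq]
    exact hts.symm

/-- For n ≡ 2 (mod 8) with 3 ∤ n, no (3,1)-sum-free arithmetic progression in Z_n
has size (n+2)/4, and the maximum size of such a progression is (n-2)/4. -/
theorem stmt15 (n : ℕ) (h8 : n % 8 = 2) (h3 : ¬ 3 ∣ n) :
    (∀ (a e : ZMod n) (c : ℕ),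
      Disjoint (foldSum (apSet n a e c) 3) (apSet n a e c) →
      (apSet n a e c).card ≠ (n + 2) / 4) ∧
    alpha31 n = (n - 2) / 4 := by
  obtain ⟨k, hn⟩ : ∃ k, n = 8 * k + 2 := ⟨n / 8, by omega⟩
  have hbound : ∀ m ∈ {m : ℕ | ∃ (a e : ZMod n) (c : ℕ),
      Disjoint (foldSum (apSet n a e c) 3) (apSet n a e c) ∧ (apSet n a e c).card = m},
      m ≤ 2 * k := by
    rintro m ⟨a, e, c, h, rfl⟩
    exact card_apSet_le_of_disjoint hn h3 h
  refine ⟨fun a e c h => by have := card_apSet_le_of_disjoint hn h3 h; omega, ?_⟩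
  rw [show (n - 2) / 4 = 2 * k by omega]
  refine le_antisymm (csSup_le' hbound) ?_
  rcases Nat.eq_zero_or_pos k with rfl | hk
  · exact Nat.zero_le _
  refine le_csSup ⟨2 * k, hbound⟩ ⟨k, 1, 2 * k - 1, ?_, ?_⟩
  · exact disjoint_foldSum_three_apSet_natCast_one (by omega) (by omega)
  · rw [card_apSet_one (by omega)]; omega
end

section
/- The maximum size of a (2,1)-sum-free (i.e. sum-free) arithmetic progression in Z_n equals n/2 if n is even, and ⌊(n+1)/3⌋ if n is odd. -/
open Finset Pointwise

lemma mem_apSet_of_le {n : ℕ} {a e : ZMod n} {c i : ℕ} (hi : i ≤ c) :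
    a + (i : ℕ) • e ∈ apSet n a e c := by
  exact Finset.mem_image.mpr ⟨i, Finset.mem_range.mpr (by omega), rfl⟩

lemma key {n : ℕ} (hn : 2 ≤ n) (a e : ZMod n) (c : ℕ)
    (hd : Disjoint (apSet n a e c + apSet n a e c) (apSet n a e c)) :
    (∃ d, d ∣ n ∧ d ≠ n ∧ (apSet n a e c).card ≤ d) ∨ 3 * (apSet n a e c).card ≤ n + 1 := by
  haveI : NeZero n := ⟨by omega⟩
  set d := addOrderOf e with hdDef
  have hdvd : d ∣ n := by
    have := addOrderOf_dvd_card (x := e)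
    rwa [ZMod.card] at this
  have hdpos : 0 < d := addOrderOf_pos e
  by_cases hmem : a ∈ AddSubgroup.zmultiples e
  · right
    obtain ⟨u, hu⟩ := AddSubgroup.mem_zmultiples_iff.mp hmem
    -- claim: no t in [-c, 2c] with d ∣ u + t
    have claim : ∀ t : ℤ, -(c:ℤ) ≤ t → t ≤ 2*c → ¬ ((d:ℤ) ∣ u + t) := by
      intro t h1 h2 hdvd'
      have h0 : (u + t) • e = 0 := addOrderOf_dvd_iff_zsmul_eq_zero.mp hdvd'
      obtain ⟨i, j, k, hi, hj, hk, ht⟩ :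
          ∃ i j k : ℕ, i ≤ c ∧ j ≤ c ∧ k ≤ c ∧ (i:ℤ) + j - k = t :=
        ⟨t.toNat ⊓ c, t.toNat - t.toNat ⊓ c, (-t).toNat, by omega, by omega, by omega, by omega⟩
      have heq : (a + (i : ℕ) • e) + (a + (j : ℕ) • e) = a + (k : ℕ) • e := by
        rw [← hu, ← natCast_zsmul e i, ← natCast_zsmul e j, ← natCast_zsmul e k,
          ← sub_eq_zero]
        have : ((u • e + (i:ℤ) • e) + (u • e + (j:ℤ) • e)) - (u • e + (k:ℤ) • e)
            = (u + t) • e := by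
          rw [← ht]; module
        rw [this, h0]
      exact Finset.disjoint_left.mp hd
        (Finset.add_mem_add (mem_apSet_of_le hi) (mem_apSet_of_le hj))
        (heq ▸ mem_apSet_of_le hk)
    have hdge : 3 * c + 2 ≤ d := by
      by_contra hlt
      push_neg at hlt
      set t : ℤ := ((c : ℤ) - u) % d - c with htDef
      have h1 : 0 ≤ ((c:ℤ) - u) % d := Int.emod_nonneg _ (by exact_mod_cast hdpos.ne')
      have h2 : ((c:ℤ) - u) % d < d := Int.emod_lt_of_pos _ (by exact_mod_cast hdpos)
      refine claim t (by omega) (by omega) ⟨-(((c:ℤ) - u) / d), ?_⟩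
      rw [htDef, Int.emod_def]; ring
    have hcard : (apSet n a e c).card ≤ c + 1 := le_trans Finset.card_image_le (by simp)
    have hdn : d ≤ n := Nat.le_of_dvd (by omega) hdvd
    omega
  · left
    refine ⟨d, hdvd, ?_, ?_⟩
    · intro hEq
      apply hmem
      have hcard : Nat.card (AddSubgroup.zmultiples e) = Nat.card (ZMod n) := by
        rw [Nat.card_zmultiples, Nat.card_eq_fintype_card, ZMod.card]; exact hEq
      rw [AddSubgroup.eq_top_of_card_eq _ hcard]
      trivial
    · haveI : DecidablePred (· ∈ (AddSubgroup.zmultiples e : Set (ZMod n))) :=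
        Classical.decPred _
      have hsub : apSet n a e c ⊆
          Finset.image (fun z => a + z)
            (Set.toFinset (AddSubgroup.zmultiples e : Set (ZMod n))) := by
        intro x hx
        obtain ⟨i, _, rfl⟩ := Finset.mem_image.mp hx
        exact Finset.mem_image.mpr ⟨(i : ℕ) • e,
          Set.mem_toFinset.mpr ⟨(i : ℤ), natCast_zsmul e i⟩, rfl⟩
      calc (apSet n a e c).card ≤ _ := Finset.card_le_card hsub
        _ ≤ (Set.toFinset (AddSubgroup.zmultiples e : Set (ZMod n))).card :=
          Finset.card_image_le
        _ = d := by rw [Set.toFinset_card, ← Nat.card_eq_fintype_card]; exact Nat.card_zmultiples e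


lemma even_card {n : ℕ} (hn : 2 ≤ n) (h2 : 2 ∣ n) :
    (apSet n 1 2 (n / 2 - 1)).card = n / 2 := by
  haveI : NeZero n := ⟨by omega⟩
  have hform : ∀ i : ℕ, (1 : ZMod n) + (i : ℕ) • (2 : ZMod n) = ((1 + 2 * i : ℕ) : ZMod n) := by
    intro i; push_cast [nsmul_eq_mul]; ring
  rw [apSet]
  rw [Finset.card_image_of_injOn, Finset.card_range]
  · omega
  · intro i hi j hj hij
    simp only [Finset.mem_coe, Finset.mem_range] at hi hj
    dsimp only at hij
    rw [hform, hform] at hij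
    have hi' : 1 + 2 * i < n := by omega
    have hj' : 1 + 2 * j < n := by omega
    have := congrArg ZMod.val hij
    rw [ZMod.val_cast_of_lt hi', ZMod.val_cast_of_lt hj'] at this
    omega

lemma even_disj {n : ℕ} (hn : 2 ≤ n) (h2 : 2 ∣ n) :
    Disjoint (apSet n 1 2 (n / 2 - 1) + apSet n 1 2 (n / 2 - 1)) (apSet n 1 2 (n / 2 - 1)) := by
  haveI : NeZero n := ⟨by omega⟩
  set f := ZMod.castHom h2 (ZMod 2) with hf
  have hval : ∀ x ∈ apSet n 1 2 (n / 2 - 1), f x = 1 := by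
    intro x hx
    obtain ⟨i, _, rfl⟩ := Finset.mem_image.mp hx
    rw [map_add, map_nsmul, map_one]
    have : f 2 = 0 := by
      rw [show (2 : ZMod n) = ((2 : ℕ) : ZMod n) by push_cast; rfl, map_natCast]
      decide
    rw [this, smul_zero, add_zero]
  rw [Finset.disjoint_left]
  intro x hx hx'
  obtain ⟨y, hy, z, hz, rfl⟩ := Finset.mem_add.mp hx
  have h1 : f (y + z) = 1 := hval _ hx'
  rw [map_add, hval y hy, hval z hz] at h1
  exact absurd h1 (by decide)

lemma odd_card {n : ℕ} (hn : 2 ≤ n) (h2 : ¬ 2 ∣ n) :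
    (apSet n (((n+1)/3 : ℕ) : ZMod n) 1 ((n+1)/3 - 1)).card = (n+1)/3 := by
  haveI : NeZero n := ⟨by omega⟩
  set t := (n+1)/3 with htdef
  have ht1 : 1 ≤ t := by omega
  have h3t : 3 * t ≤ n + 1 := by omega
  have hform : ∀ i : ℕ, ((t : ℕ) : ZMod n) + (i : ℕ) • (1 : ZMod n) = ((t + i : ℕ) : ZMod n) := by
    intro i; push_cast [nsmul_eq_mul]; ring
  rw [apSet]
  rw [Finset.card_image_of_injOn, Finset.card_range]
  · omega
  · intro i hi j hj hij
    simp only [Finset.mem_coe, Finset.mem_range] at hi hj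
    dsimp only at hij
    rw [hform, hform] at hij
    have := congrArg ZMod.val hij
    rw [ZMod.val_cast_of_lt (by omega), ZMod.val_cast_of_lt (by omega)] at this
    omega

lemma odd_disj {n : ℕ} (hn : 2 ≤ n) (h2 : ¬ 2 ∣ n) :
    Disjoint (apSet n (((n+1)/3 : ℕ) : ZMod n) 1 ((n+1)/3 - 1)
        + apSet n (((n+1)/3 : ℕ) : ZMod n) 1 ((n+1)/3 - 1))
      (apSet n (((n+1)/3 : ℕ) : ZMod n) 1 ((n+1)/3 - 1)) := by
  haveI : NeZero n := ⟨by omega⟩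
  set t := (n+1)/3 with htdef
  have ht1 : 1 ≤ t := by omega
  have h3t : 3 * t ≤ n + 1 := by omega
  have hn3 : 3 ≤ n := by omega
  have hform : ∀ i : ℕ, ((t : ℕ) : ZMod n) + (i : ℕ) • (1 : ZMod n) = ((t + i : ℕ) : ZMod n) := by
    intro i; push_cast [nsmul_eq_mul]; ring
  rw [Finset.disjoint_left]
  intro x hx hx'
  obtain ⟨y, hy, z, hz, rfl⟩ := Finset.mem_add.mp hx
  obtain ⟨i, hi, rfl⟩ := Finset.mem_image.mp hy
  obtain ⟨j, hj, rfl⟩ := Finset.mem_image.mp hz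
  obtain ⟨k, hk, hke⟩ := Finset.mem_image.mp hx'
  simp only [Finset.mem_range] at hi hj hk
  rw [hform, hform, hform, ← Nat.cast_add, ZMod.natCast_eq_natCast_iff] at hke
  have := hke.symm  -- t + k ≡ (t+i)+(t+j) [MOD n]
  unfold Nat.ModEq at this
  have e1 : (t + i + (t + j)) % n = t + i + (t + j) - n ∨ (t + i + (t + j)) % n = t + i + (t + j) := by
    rcases Nat.lt_or_ge (t + i + (t + j)) n with h | h
    · right; exact Nat.mod_eq_of_lt h
    · left
      rw [Nat.mod_eq_sub_mod h, Nat.mod_eq_of_lt (by omega)]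
  have e2 : (t + k) % n = t + k := Nat.mod_eq_of_lt (by omega)
  omega

/-- The maximum size of a sum-free arithmetic progression in Z_n equals n/2 if n
is even and ⌊(n+1)/3⌋ if n is odd. -/
theorem stmt18 (n : ℕ) (hn : 2 ≤ n) :
    (2 ∣ n →
      sSup {m : ℕ | ∃ (a e : ZMod n) (c : ℕ),
        Disjoint (apSet n a e c + apSet n a e c) (apSet n a e c) ∧
        (apSet n a e c).card = m} = n / 2) ∧
    (¬ 2 ∣ n →
      sSup {m : ℕ | ∃ (a e : ZMod n) (c : ℕ),
        Disjoint (apSet n a e c + apSet n a e c) (apSet n a e c) ∧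
        (apSet n a e c).card = m} = (n + 1) / 3) := by
  constructor
  · intro h2
    apply IsGreatest.csSup_eq
    constructor
    · exact ⟨1, 2, n / 2 - 1, even_disj hn h2, even_card hn h2⟩
    · rintro m ⟨a, e, c, hd, rfl⟩
      rcases key hn a e c hd with ⟨d, hdvd, hne, hle⟩ | h3
      · obtain ⟨k, hk⟩ := hdvd
        have hk2 : 2 ≤ k := by
          rcases Nat.lt_or_ge k 2 with h | h
          · interval_cases k <;> omega
          · exact h
        have : d * 2 ≤ d * k := Nat.mul_le_mul_left d hk2
        omega
      · omega
  · intro h2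
    apply IsGreatest.csSup_eq
    constructor
    · exact ⟨(((n+1)/3 : ℕ) : ZMod n), 1, (n+1)/3 - 1, odd_disj hn h2, odd_card hn h2⟩
    · rintro m ⟨a, e, c, hd, rfl⟩
      rcases key hn a e c hd with ⟨d, hdvd, hne, hle⟩ | h3
      · obtain ⟨k, hk⟩ := hdvd
        have hkodd : ¬ 2 ∣ k := fun h => h2 (hk ▸ Dvd.dvd.mul_left h d)
        have hk3 : 3 ≤ k := by
          rcases Nat.lt_or_ge k 3 with h | h
          · interval_cases k <;> omega
          · exact h
        have : d * 3 ≤ d * k := Nat.mul_le_mul_left d hk3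
        omega
      · omega
end

section
/- Let G be a finite abelian group of order n with exponent v, and let k > l ≥ 1. If v has a divisor d₀ such that d₀ is not congruent modulo k+l to any integer between 1 and gcd(d₀, k-l) inclusive, then max over divisors d of v of (⌊(d-1-gcd(d,k-l))/(k+l)⌋ + 1)·(n/d) ≥ n/(k+l). -/
/-- If the exponent v of G has a divisor d₀ not congruent mod k+l to any integer
between 1 and gcd(d₀,k-l), then
max over d ∣ v of (⌊(d-1-gcd(d,k-l))/(k+l)⌋+1)·(n/d) ≥ n/(k+l). -/
theorem stmt19 {G : Type*} [AddCommGroup G] [Fintype G]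
    (k l : ℕ) (hl : 1 ≤ l) (hkl : l < k) (hn : 1 < Fintype.card G)
    (d₀ : ℕ) (hd0 : d₀ ∣ AddMonoid.exponent G)
    (hcong : ∀ j : ℕ, 1 ≤ j → j ≤ Nat.gcd d₀ (k - l) → ¬ d₀ ≡ j [MOD k + l]) :
    ∃ d : ℕ, d ∣ AddMonoid.exponent G ∧
      (Fintype.card G : ℚ) / (k + l) ≤
        ((((d - 1 - Nat.gcd d (k - l)) / (k + l) + 1) * (Fintype.card G / d) : ℕ) : ℚ) := by
  refine ⟨d₀, hd0, ?_⟩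
  set n := Fintype.card G with hn'
  have hexp : AddMonoid.exponent G ∣ n := AddGroup.exponent_dvd_card
  have hdn : d₀ ∣ n := hd0.trans hexp
  have hd0pos : 0 < d₀ := Nat.pos_of_dvd_of_pos hdn (by omega)
  set m := k + l with hm'
  have hm : 3 ≤ m := by omega
  set g := Nat.gcd d₀ (k - l) with hg'
  have hgd : g ∣ d₀ := Nat.gcd_dvd_left _ _
  have hg1 : 1 ≤ g := Nat.pos_of_dvd_of_pos hgd hd0pos
  have hgkl : g ≤ k - l := Nat.le_of_dvd (by omega) (Nat.gcd_dvd_right _ _)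
  have hglt : g + 1 ≤ m := by omega
  have hdg : g + 1 ≤ d₀ := by
    have hle : g ≤ d₀ := Nat.le_of_dvd hd0pos hgd
    rcases Nat.lt_or_ge g d₀ with h | h
    · omega
    · exfalso
      exact hcong d₀ hd0pos (by omega) (Nat.ModEq.refl d₀)
  set r := d₀ % m with hr'
  have hrlt : r < m := Nat.mod_lt _ (by omega)
  have hq : d₀ = m * (d₀ / m) + r := (Nat.div_add_mod d₀ m).symm
  have hrcase : r = 0 ∨ g < r := by
    by_contra h
    push_neg at h
    obtain ⟨h1, h2⟩ := h
    refine hcong r (Nat.pos_of_ne_zero h1) h2 ?_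
    show d₀ % m = r % m
    rw [← hr']
    exact (Nat.mod_eq_of_lt hrlt).symm
  set a := d₀ - 1 - g with ha'
  -- key: a % m + g + 1 ≤ m
  have key2 : a % m + g + 1 ≤ m := by
    rcases hrcase with h0 | hgr
    · -- d₀ = m * q, q ≥ 1
      have hmd : m ∣ d₀ := Nat.dvd_of_mod_eq_zero h0
      obtain ⟨q, hq2⟩ := hmd
      have hq1 : q ≠ 0 := by rintro rfl; omega
      obtain ⟨q', rfl⟩ : ∃ q', q = q' + 1 := ⟨q - 1, by omega⟩
      have hd2 : d₀ = m * q' + m := by rw [hq2, Nat.mul_add, Nat.mul_one]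
      have haeq : a = m * q' + (m - g - 1) := by omega
      have : a % m = (m - g - 1) % m := by rw [haeq]; exact Nat.mul_add_mod _ _ _
      rw [this, Nat.mod_eq_of_lt (by omega)]
      omega
    · have haeq : a = m * (d₀ / m) + (r - g - 1) := by omega
      have : a % m = (r - g - 1) % m := by rw [haeq]; exact Nat.mul_add_mod _ _ _
      rw [this, Nat.mod_eq_of_lt (by omega)]
      omega
  have hdiv : a = m * (a / m) + a % m := (Nat.div_add_mod a m).symm
  have key : d₀ ≤ m * (a / m + 1) := by
    rw [Nat.mul_add, Nat.mul_one]
    omega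
  -- now the rational inequality
  set q₀ := a / m + 1 with hq0'
  have hN : d₀ * (n / d₀) = n := Nat.mul_div_cancel' hdn
  have hnat : n ≤ q₀ * (n / d₀) * m := by
    calc n = d₀ * (n / d₀) := hN.symm
      _ ≤ m * q₀ * (n / d₀) := Nat.mul_le_mul_right _ key
      _ = q₀ * (n / d₀) * m := by ring
  have hmpos : (0 : ℚ) < (k : ℚ) + (l : ℚ) := by positivity
  rw [div_le_iff₀ hmpos]
  have : ((q₀ * (n / d₀) : ℕ) : ℚ) * ((k : ℚ) + (l : ℚ)) = ((q₀ * (n / d₀) * m : ℕ) : ℚ) := by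
    push_cast [hm']
    ring
  rw [this]
  exact_mod_cast hnat
end
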